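/- arXiv:2206.01600 — 5 statements merged into one kernel-verified Lean document; each statement's English description precedes it below -/
import Mathlib

section
/- Fix an integer ℓ ≥ 2, an ℓ-periodic function r : ℤ → ℕ, an index a ∈ {0,…,ℓ−1}, and an integer p. For a Young diagram μ with the a-coloring, let n_c(μ) be the number of boxes of color c and define w(μ) := ∑_{c=0}^{ℓ−1} n_c(μ) r_c − p · col(μ). Then, in the ring of formal power series in q_0, …, q_{ℓ−1} with coefficients in the Laurent polynomial ring ℤ[y, y^{−1}] (product topology), writing q̃_c := y^{2 r_c} q_c for c ∈ ℤ (ℓ-periodically) and z := q̃_0 ⋯ q̃_{ℓ−1}, the family over all Young diagrams μ of the terms y^{2 w(μ)} ∏_{c=0}^{ℓ−1} q_c^{n_c(μ)} has a sum, and this sum equals ∏_{k=1}^∞ (1 − y^{−2p} z^k)^{−1} ∏_{c=1}^{ℓ−1} (1 − y^{−2p} z^{k−1} q̃_a q̃_{a−1} ⋯ q̃_{a−c+1})^{−1}, where each factor is a unit and the infinite product over k is a tprod in the product topology. -/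
/-
Read with the `a`-coloring, a column of height `h` contributes the monomial
`t_h = y^{-2p} q̃_a q̃_{a-1} ⋯ q̃_{a-h+1}`, so the summand of `μ` is the product of `t_h` over the
columns of `μ` (the colour counts `n_c(μ)` and the weight `w(μ)` are read off cell by cell).
Listing the column heights of `μ` identifies Young diagrams with partitions, and Euler's argument
gives `∑_μ ∏_{columns} t_h = ∏_{h ≥ 1} (1 - t_h)⁻¹`; everything converges coefficientwise
because `t_h` has total degree `h`. Finally `ℓ`-periodicity gives
`t_{kℓ+c} = y^{-2p} z^k q̃_a ⋯ q̃_{a-c+1}`, and grouping the factors `h = kℓ + 1, …, kℓ + ℓ`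
yields the stated product.
-/

noncomputable section

/-- The discrete topology on the Laurent polynomial ring `ℤ[y, y⁻¹]`. -/
instance : TopologicalSpace (LaurentPolynomial ℤ) := ⊥

/-- The product (coefficient-wise) topology on a multivariate power series ring, with the
coefficient ring given its topology (here the coefficients are discrete). -/
instance mvPowerSeriesTopology (σ R : Type*) [TopologicalSpace R] :
    TopologicalSpace (MvPowerSeries σ R) :=
  inferInstanceAs (TopologicalSpace ((σ →₀ ℕ) → R))

/-- The number of (nonempty) columns of a Young diagram, i.e. the length of its first row. -/
def YoungDiagram.ncols (μ : YoungDiagram) : ℕ := μ.rowLen 0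

/-- The number of boxes of color `c` in the `a`-coloring of a Young diagram `μ` (the paper's
box `(i,j)`, `i` column and `j` row, 1-indexed, has color `≡ a − j + 1 (mod ℓ)`; for a Mathlib
cell, `j = cell.1 + 1`, so the color of a cell is `≡ a − cell.1 (mod ℓ)`). -/
def ncolor (ℓ : ℕ) (a : ℤ) (c : ℕ) (μ : YoungDiagram) : ℕ :=
  (μ.cells.filter fun cell => (a - (cell.1 : ℤ)) % ℓ = (c : ℤ) % ℓ).card

open Finset Filter Topology

theorem Finset.prod_range_mul_eq_prod_prod {M : Type*} [CommMonoid M] (f : ℕ → M) (ℓ N : ℕ) :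
    ∏ h ∈ range (N * ℓ), f h = ∏ k ∈ range N, ∏ c ∈ range ℓ, f (k * ℓ + c) := by
  induction N with
  | zero => simp
  | succ N ih => rw [add_one_mul, prod_range_add, ih, prod_range_succ]

theorem Finset.prod_range_add_one_eq_mul_prod_Icc {M : Type*} [CommMonoid M] (f : ℕ → M) {n : ℕ}
    (hn : n ≠ 0) : ∏ c ∈ range n, f (c + 1) = f n * ∏ c ∈ Icc 1 (n - 1), f c := by
  obtain ⟨m, rfl⟩ : ∃ m, n = m + 1 := ⟨n - 1, by omega⟩
  rw [prod_range_succ, mul_comm, Nat.add_sub_cancel, ← Order.succ_eq_add_one m,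
    ← Ico_succ_right_eq_Icc, prod_Ico_eq_prod_range]
  simp [add_comm]

theorem LaurentPolynomial.T_sum {R : Type*} [CommSemiring R] {ι : Type*} (s : Finset ι)
    (f : ι → ℤ) :
    (T (∑ i ∈ s, f i) : LaurentPolynomial R) = ∏ i ∈ s, T (f i) := by
  classical
  induction s using Finset.induction_on with
  | empty => simp [T_zero]
  | insert i s hi ih => rw [sum_insert hi, prod_insert hi, T_add, ih]

theorem Function.Periodic.map_emod {M : Type*} {f : ℤ → M} {ℓ : ℤ} (hf : Function.Periodic f ℓ)
    (y : ℤ) : f (y % ℓ) = f y := by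
  rw [Int.emod_def, mul_comm]
  exact hf.sub_int_mul_eq _

theorem Function.Periodic.prod_range_sub {M : Type*} [CommMonoid M] {f : ℤ → M} {ℓ : ℕ}
    (hf : Function.Periodic f ℓ) (c : ℤ) :
    ∏ b ∈ range ℓ, f (c - b) = ∏ b ∈ range ℓ, f b := by
  rcases Nat.eq_zero_or_pos ℓ with rfl | hℓ
  · simp
  have hstep : ∀ c : ℤ, ∏ b ∈ range ℓ, f (c + 1 - b) = ∏ b ∈ range ℓ, f (c - b) := by
    intro c
    obtain ⟨m, rfl⟩ : ∃ m, ℓ = m + 1 := ⟨ℓ - 1, by omega⟩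
    rw [prod_range_succ', prod_range_succ]
    congr 1
    · exact prod_congr rfl fun b _ => by push_cast; ring_nf
    · rw [← hf.sub_eq]; push_cast; ring_nf
  have hconst : ∀ c : ℤ, ∏ b ∈ range ℓ, f (c - b) = ∏ b ∈ range ℓ, f (0 - b) := by
    intro c
    induction c using Int.induction_on with
    | zero => rfl
    | succ c ih => rw [hstep, ih]
    | pred c ih => rw [← ih, ← hstep]; ring_nf
  -- the window ending at `ℓ - 1` is `range ℓ` read backwards
  rw [hconst c, ← hconst (ℓ - 1), ← prod_range_reflect]
  exact prod_congr rfl fun b hb => by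
    rw [Nat.cast_sub (by simp at hb; omega), Nat.cast_sub (by omega)]; ring_nf

namespace MvPowerSeries

variable {σ R : Type*} [CommRing R]

def EqUpToDegree (n : ℕ) (f g : MvPowerSeries σ R) : Prop :=
  (n : ℕ∞) < (f - g).order

namespace EqUpToDegree

variable {n : ℕ} {f g h f' g' : MvPowerSeries σ R}

theorem refl (n : ℕ) (f : MvPowerSeries σ R) : EqUpToDegree n f f := by
  simp [EqUpToDegree]

theorem symm (hfg : EqUpToDegree n f g) : EqUpToDegree n g f := by
  rwa [EqUpToDegree, ← neg_sub, order_neg]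

theorem trans (hfg : EqUpToDegree n f g) (hgh : EqUpToDegree n g h) : EqUpToDegree n f h :=
  (lt_min hfg hgh).trans_le <| by simpa using min_order_le_add (f := f - g) (g := g - h)

theorem add (hf : EqUpToDegree n f g) (hf' : EqUpToDegree n f' g') :
    EqUpToDegree n (f + f') (g + g') :=
  (lt_min hf hf').trans_le <| by
    simpa [add_sub_add_comm] using min_order_le_add (f := f - g) (g := f' - g')

theorem mul_left_of_le_order {k j : ℕ} (hfg : EqUpToDegree k f g) {a : MvPowerSeries σ R}
    (ha : (j : ℕ∞) ≤ a.order) : EqUpToDegree (k + j) (a * f) (a * g) := by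
  rw [EqUpToDegree, ← mul_sub]
  have hk : ((k + 1 : ℕ) : ℕ∞) ≤ (f - g).order := by exact_mod_cast Order.add_one_le_of_lt hfg
  calc ((k + j : ℕ) : ℕ∞) < ((j + (k + 1) : ℕ) : ℕ∞) := by exact_mod_cast (by omega)
    _ = (j : ℕ∞) + ((k + 1 : ℕ) : ℕ∞) := by push_cast; rfl
    _ ≤ a.order + (f - g).order := add_le_add ha hk
    _ ≤ _ := le_order_mul

theorem mul_left (hfg : EqUpToDegree n f g) (a : MvPowerSeries σ R) :
    EqUpToDegree n (a * f) (a * g) := by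
  simpa using hfg.mul_left_of_le_order (j := 0) (a := a) zero_le

theorem mul (hf : EqUpToDegree n f g) (hf' : EqUpToDegree n f' g') :
    EqUpToDegree n (f * f') (g * g') := by
  have h1 := hf'.mul_left f
  have h2 := hf.mul_left g'
  rw [mul_comm g' f, mul_comm g' g] at h2
  exact h1.trans h2

theorem coeff_eq (hfg : EqUpToDegree n f g) {d : σ →₀ ℕ} (hd : d.degree ≤ n) :
    coeff d f = coeff d g :=
  sub_eq_zero.1 <| by
    rw [← map_sub]
    exact coeff_of_lt_order (lt_of_le_of_lt (by exact_mod_cast hd) hfg)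

end EqUpToDegree

theorem eqUpToDegree_zero_of_lt_order {n : ℕ} {f : MvPowerSeries σ R} (hf : (n : ℕ∞) < f.order) :
    EqUpToDegree n f 0 := by
  rwa [EqUpToDegree, sub_zero]

theorem eqUpToDegree_sum {ι : Type*} {n : ℕ} (s : Finset ι) {f g : ι → MvPowerSeries σ R}
    (h : ∀ i ∈ s, EqUpToDegree n (f i) (g i)) :
    EqUpToDegree n (∑ i ∈ s, f i) (∑ i ∈ s, g i) := by
  classical
  induction s using Finset.induction_on with
  | empty => exact .refl _ _
  | insert i s hi ih =>
    rw [sum_insert hi, sum_insert hi]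
    exact (h i (mem_insert_self i s)).add (ih fun j hj => h j (mem_insert_of_mem hj))

theorem eqUpToDegree_prod {ι : Type*} {n : ℕ} (s : Finset ι) {f g : ι → MvPowerSeries σ R}
    (h : ∀ i ∈ s, EqUpToDegree n (f i) (g i)) :
    EqUpToDegree n (∏ i ∈ s, f i) (∏ i ∈ s, g i) := by
  classical
  induction s using Finset.induction_on with
  | empty => exact .refl _ _
  | insert i s hi ih =>
    rw [prod_insert hi, prod_insert hi]
    exact (h i (mem_insert_self i s)).mul (ih fun j hj => h j (mem_insert_of_mem hj))

theorem isUnit_one_sub_of_one_le_order {f : MvPowerSeries σ R} (hf : 1 ≤ f.order) :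
    IsUnit (1 - f) := by
  rw [isUnit_iff_constantCoeff, map_sub, map_one,
    (one_le_order_iff_constCoeff_eq_zero.1 hf), sub_zero]
  exact isUnit_one

theorem eqUpToDegree_inverse_one_sub {n : ℕ} {f : MvPowerSeries σ R} (hf : (n : ℕ∞) < f.order) :
    EqUpToDegree n (Ring.inverse (1 - f)) 1 := by
  have hinv := Ring.mul_inverse_cancel _ <|
    isUnit_one_sub_of_one_le_order (Order.one_le_iff_pos.2 (zero_le.trans_lt hf))
  rw [EqUpToDegree, show Ring.inverse (1 - f) - 1 = f * Ring.inverse (1 - f) by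
    linear_combination hinv]
  exact hf.trans_le (le_self_add.trans le_order_mul)

theorem eqUpToDegree_of_coeff_eq {n : ℕ} {f g : MvPowerSeries σ R}
    (h : ∀ d : σ →₀ ℕ, d.degree ≤ n → coeff d f = coeff d g) : EqUpToDegree n f g := by
  refine (ENat.natCast_lt_natCast.2 n.lt_succ_self).trans_le (nat_le_order fun d hd => ?_)
  rw [map_sub, h d (Nat.lt_succ_iff.1 hd), sub_self]

theorem tendsto_of_eqUpToDegree [TopologicalSpace R] {α : Type*} {l : Filter α}
    {F : α → MvPowerSeries σ R} {P : MvPowerSeries σ R}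
    (h : ∀ n, ∀ᶠ x in l, EqUpToDegree n (F x) P) : Tendsto F l (𝓝 P) :=
  (WithPiTopology.tendsto_iff_coeff_tendsto F l P).2 fun d =>
    tendsto_const_nhds.congr' <| (h d.degree).mono fun _ hx => (hx.coeff_eq le_rfl).symm

end MvPowerSeries

theorem List.finite_setOf_length_le_forall_le (m n : ℕ) :
    {w : List ℕ | w.length ≤ n ∧ ∀ x ∈ w, x ≤ m}.Finite := by
  refine ((List.finite_length_le (Fin (m + 1)) n).image (List.map Fin.val)).subset ?_
  rintro w ⟨hlen, hw⟩
  refine ⟨w.attach.map fun x => ⟨x.1, Nat.lt_succ_of_le (hw x.1 x.2)⟩, by simpa using hlen, ?_⟩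
  simp

section Partitions

theorem finite_setOf_boundedPartition (m n : ℕ) :
    {w : List ℕ | w.SortedGE ∧ (∀ x ∈ w, 0 < x ∧ x ≤ m) ∧ w.sum ≤ n}.Finite :=
  (List.finite_setOf_length_le_forall_le m n).subset fun w ⟨_, hw, hsum⟩ =>
    ⟨(w.length_le_sum_of_one_le fun x hx => (hw x hx).1).trans hsum, fun x hx => (hw x hx).2⟩

def boundedPartitions (m n : ℕ) : Finset (List ℕ) :=
  (finite_setOf_boundedPartition m n).toFinset

variable {m n : ℕ} {w : List ℕ}

theorem mem_boundedPartitions :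
    w ∈ boundedPartitions m n ↔ w.SortedGE ∧ (∀ x ∈ w, 0 < x ∧ x ≤ m) ∧ w.sum ≤ n :=
  Set.Finite.mem_toFinset _

theorem boundedPartitions_zero (n : ℕ) : boundedPartitions 0 n = {[]} := by
  ext w
  rw [mem_boundedPartitions, mem_singleton]
  constructor
  · rintro ⟨-, hw, -⟩
    exact List.eq_nil_iff_forall_not_mem.2 fun x hx => by have := hw x hx; omega
  · rintro rfl
    simp [List.sortedGE_iff_pairwise]

theorem boundedPartitions_succ_of_le (h : n ≤ m) :
    boundedPartitions (m + 1) n = boundedPartitions m n := by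
  ext w
  simp only [mem_boundedPartitions]
  refine and_congr_right fun _ => and_congr_left fun hsum => forall₂_congr fun x hx => ?_
  have := (List.le_sum_of_mem hx).trans (hsum.trans h)
  omega

theorem filter_not_mem_boundedPartitions_succ :
    (boundedPartitions (m + 1) n).filter (m + 1 ∉ ·) = boundedPartitions m n := by
  ext w
  simp only [mem_filter, mem_boundedPartitions]
  constructor
  · rintro ⟨⟨hs, hw, hsum⟩, hm⟩
    exact ⟨hs, fun x hx => ⟨(hw x hx).1, by have := hw x hx; grind⟩, hsum⟩
  · rintro ⟨hs, hw, hsum⟩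
    exact ⟨⟨hs, fun x hx => ⟨(hw x hx).1, by have := hw x hx; omega⟩, hsum⟩,
      fun hm => by have := hw _ hm; omega⟩

theorem filter_mem_boundedPartitions_succ_add :
    (boundedPartitions (m + 1) (n + (m + 1))).filter (m + 1 ∈ ·) =
      (boundedPartitions (m + 1) n).map ⟨List.cons (m + 1), List.cons_injective⟩ := by
  ext w
  simp only [mem_filter, mem_boundedPartitions, Finset.mem_map, Function.Embedding.coeFn_mk]
  constructor
  · rintro ⟨⟨hs, hw, hsum⟩, hm⟩
    obtain ⟨x, v, rfl⟩ := List.exists_cons_of_ne_nil (List.ne_nil_of_mem hm)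
    rw [List.sortedGE_iff_pairwise, List.pairwise_cons] at hs
    have hx : x = m + 1 := by
      rcases List.mem_cons.1 hm with h | h
      · exact h.symm
      · exact le_antisymm (hw x List.mem_cons_self).2 (hs.1 _ h)
    subst hx
    refine ⟨v, ⟨List.sortedGE_iff_pairwise.2 hs.2, fun y hy => hw y (List.mem_cons_of_mem _ hy),
      ?_⟩, rfl⟩
    simp only [List.sum_cons] at hsum
    omega
  · rintro ⟨v, ⟨hs, hw, hsum⟩, rfl⟩
    refine ⟨⟨?_, ?_, ?_⟩, List.mem_cons_self⟩
    · rw [List.sortedGE_iff_pairwise, List.pairwise_cons]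
      exact ⟨fun y hy => (hw y hy).2, List.sortedGE_iff_pairwise.1 hs⟩
    · intro y hy
      rcases List.mem_cons.1 hy with rfl | hy
      · omega
      · exact hw y hy
    · simp only [List.sum_cons]
      omega

theorem sum_boundedPartitions_succ_add {M : Type*} [AddCommMonoid M] (F : List ℕ → M) :
    ∑ w ∈ boundedPartitions (m + 1) (n + (m + 1)), F w =
      ∑ w ∈ boundedPartitions m (n + (m + 1)), F w +
        ∑ v ∈ boundedPartitions (m + 1) n, F ((m + 1) :: v) := by
  rw [← sum_filter_not_add_sum_filter _ (m + 1 ∈ ·), filter_not_mem_boundedPartitions_succ,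
    filter_mem_boundedPartitions_succ_add, sum_map]
  rfl

end Partitions

def YoungDiagram.colLens (μ : YoungDiagram) : List ℕ := μ.transpose.rowLens

def YoungDiagram.equivColLens : YoungDiagram ≃ {w : List ℕ // w.SortedGE ∧ ∀ x ∈ w, 0 < x} :=
  YoungDiagram.transposeOrderIso.toEquiv.trans YoungDiagram.equivListRowLens

theorem YoungDiagram.length_colLens (μ : YoungDiagram) : μ.colLens.length = μ.ncols := by
  rw [colLens, length_rowLens, colLen_transpose, ncols]

theorem YoungDiagram.prod_cells_eq_prod_colLens {M : Type*} [CommMonoid M] (μ : YoungDiagram)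
    (f : ℕ → M) : ∏ x ∈ μ.cells, f x.1 = (μ.colLens.map fun h => ∏ i ∈ range h, f i).prod := by
  have hcols : μ.colLens = (List.range μ.ncols).map μ.colLen := by
    simp [colLens, rowLens, ncols, colLen_transpose, rowLen_transpose]
  have hlist : ∀ g : ℕ → M, ((List.range μ.ncols).map g).prod = ∏ j ∈ range μ.ncols, g j := by
    intro g
    rw [Finset.prod_eq_multiset_prod, Finset.range_val, Multiset.range, Multiset.map_coe,
      Multiset.prod_coe]
  have hmaps : ∀ x ∈ μ.cells, x.2 ∈ range μ.ncols := fun x hx => by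
    rw [mem_range, ncols, ← mem_iff_lt_rowLen]
    exact μ.up_left_mem (Nat.zero_le _) le_rfl ((mem_cells x).1 hx)
  rw [hcols, List.map_map, hlist, ← prod_fiberwise_of_maps_to hmaps]
  refine prod_congr rfl fun j _ => ?_
  change ∏ x ∈ μ.col j, f x.1 = _
  rw [col_eq_prod, prod_product]
  simp

theorem prod_cells_eq_prod_pow_ncolor {M : Type*} [CommMonoid M] {ℓ : ℕ} (hℓ : ℓ ≠ 0)
    {f : ℤ → M} (hf : Function.Periodic f ℓ) (a : ℤ) (μ : YoungDiagram) :
    ∏ x ∈ μ.cells, f (a - x.1) = ∏ c ∈ range ℓ, f c ^ ncolor ℓ a c μ := by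
  have hℓ' : (0 : ℤ) < ℓ := by omega
  have hmaps : ∀ x ∈ μ.cells, ((a - x.1) % ℓ).toNat ∈ range ℓ := fun x _ => by
    have := Int.emod_lt_of_pos (a - x.1) hℓ'
    rw [mem_range]
    omega
  rw [← prod_fiberwise_of_maps_to hmaps]
  refine prod_congr rfl fun c hc => ?_
  have hc : (c : ℤ) % ℓ = c := Int.emod_eq_of_lt (by omega) (by simp at hc; omega)
  have hfiber : {x ∈ μ.cells | ((a - x.1) % ℓ).toNat = c} =
      {x ∈ μ.cells | (a - x.1) % ℓ = (c : ℤ) % ℓ} := filter_congr fun x _ => by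
    have := Int.emod_nonneg (a - x.1) hℓ'.ne'
    rw [hc]
    omega
  rw [ncolor, ← prod_const, hfiber]
  refine prod_congr rfl fun x hx => ?_
  rw [← hf.map_emod, (mem_filter.1 hx).2, hc]

namespace MvPowerSeries

variable {σ R : Type*} [CommRing R] {t : ℕ → MvPowerSeries σ R}

theorem le_order_prod_map (ht : ∀ h : ℕ, (h : ℕ∞) ≤ (t h).order) (w : List ℕ) :
    (w.sum : ℕ∞) ≤ ((w.map t).prod).order := by
  induction w with
  | nil => simp
  | cons x w ih =>
    rw [List.map_cons, List.prod_cons, List.sum_cons, Nat.cast_add]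
    exact (add_le_add (ht x) ih).trans le_order_mul

theorem eqUpToDegree_inverse_one_sub_of_lt (ht : ∀ h : ℕ, (h : ℕ∞) ≤ (t h).order) {n h : ℕ}
    (hn : n < h) : EqUpToDegree n (Ring.inverse (1 - t h)) 1 :=
  eqUpToDegree_inverse_one_sub ((ENat.natCast_lt_natCast.2 hn).trans_le (ht h))

/-- Euler's argument: a partition with a part `m + 1` is `(m + 1) :: v` with `v` a partition into
parts `≤ m + 1`, so the partial sums satisfy `S_{m+1} = S_m + t (m + 1) * S_{m+1}`. -/
theorem eqUpToDegree_sum_boundedPartitions (ht : ∀ h : ℕ, (h : ℕ∞) ≤ (t h).order) (m n : ℕ) :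
    EqUpToDegree n (∑ w ∈ boundedPartitions m n, (w.map t).prod)
      (∏ h ∈ range m, Ring.inverse (1 - t (h + 1))) := by
  induction n using Nat.strong_induction_on generalizing m with
  | _ n ih =>
  induction m with
  | zero => simpa [boundedPartitions_zero] using EqUpToDegree.refl n (1 : MvPowerSeries σ R)
  | succ m ihm =>
    rw [prod_range_succ]
    by_cases hnm : n ≤ m
    · rw [boundedPartitions_succ_of_le hnm]
      have := (eqUpToDegree_inverse_one_sub_of_lt ht (Nat.lt_succ_of_le hnm)).symm.mul_left
        (∏ h ∈ range m, Ring.inverse (1 - t (h + 1)))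
      rw [mul_one] at this
      exact ihm.trans this
    obtain ⟨n', rfl⟩ : ∃ n', n = n' + (m + 1) := ⟨n - (m + 1), by omega⟩
    have hinv := Ring.mul_inverse_cancel _ <| isUnit_one_sub_of_one_le_order <|
      (by simp : (1 : ℕ∞) ≤ ((m + 1 : ℕ) : ℕ∞)).trans (ht (m + 1))
    have hP : ∀ P : MvPowerSeries σ R, P + t (m + 1) * (P * Ring.inverse (1 - t (m + 1))) =
        P * Ring.inverse (1 - t (m + 1)) := fun P => by
      linear_combination (-P) * hinv
    rw [sum_boundedPartitions_succ_add, ← hP]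
    simp only [List.map_cons, List.prod_cons, ← mul_sum]
    refine ihm.add ?_
    simpa [prod_range_succ] using
      (ih n' (by omega) (m + 1)).mul_left_of_le_order (ht (m + 1))

/-- The infinite product `∏_{h ≥ 1} (1 - t h)⁻¹`, defined coefficientwise: when `t h` has order
at least `h`, the coefficient of `d` is already that of the partial product up to `h = degree d`. -/
def eulerProduct (t : ℕ → MvPowerSeries σ R) : MvPowerSeries σ R :=
  fun d => coeff d (∏ h ∈ range d.degree, Ring.inverse (1 - t (h + 1)))

theorem eqUpToDegree_prod_range_of_le (ht : ∀ h : ℕ, (h : ℕ∞) ≤ (t h).order) {n m m' : ℕ}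
    (hnm : n ≤ m) (hmm' : m ≤ m') :
    EqUpToDegree n (∏ h ∈ range m, Ring.inverse (1 - t (h + 1)))
      (∏ h ∈ range m', Ring.inverse (1 - t (h + 1))) := by
  rw [← prod_range_mul_prod_Ico _ hmm']
  simpa using ((eqUpToDegree_prod _ fun h hh =>
    eqUpToDegree_inverse_one_sub_of_lt ht (by simp at hh; omega)).mul_left
      (∏ h ∈ range m, Ring.inverse (1 - t (h + 1)))).symm

theorem eqUpToDegree_eulerProduct (ht : ∀ h : ℕ, (h : ℕ∞) ≤ (t h).order) {n m : ℕ}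
    (hnm : n ≤ m) :
    EqUpToDegree n (∏ h ∈ range m, Ring.inverse (1 - t (h + 1))) (eulerProduct t) :=
  eqUpToDegree_of_coeff_eq fun _ hd =>
    ((eqUpToDegree_prod_range_of_le ht le_rfl (hd.trans hnm)).coeff_eq le_rfl).symm

variable [TopologicalSpace R]

theorem hasSum_prod_colLens (ht : ∀ h : ℕ, (h : ℕ∞) ≤ (t h).order) :
    HasSum (fun μ : YoungDiagram => (μ.colLens.map t).prod) (eulerProduct t) := by
  let g : {w : List ℕ // w.SortedGE ∧ ∀ x ∈ w, 0 < x} → MvPowerSeries σ R :=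
    fun w => (w.1.map t).prod
  change HasSum (g ∘ YoungDiagram.equivColLens) _
  rw [Equiv.hasSum_iff]
  refine tendsto_of_eqUpToDegree fun n => ?_
  filter_upwards [eventually_ge_atTop ((boundedPartitions n n).subtype _)] with u hu
  have hsmall : ∑ w ∈ (boundedPartitions n n).subtype _, g w =
      ∑ w ∈ boundedPartitions n n, (w.map t).prod := by
    refine (sum_subtype_eq_sum_filter (fun w : List ℕ => (w.map t).prod)).trans ?_
    rw [filter_true_of_mem fun w hw => ?_]
    obtain ⟨hs, hw, -⟩ := mem_boundedPartitions.1 hw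
    exact ⟨hs, fun x hx => (hw x hx).1⟩
  have hlarge : EqUpToDegree n (∑ w ∈ u \ (boundedPartitions n n).subtype _, g w) 0 := by
    have hsum : ∀ w ∈ u \ (boundedPartitions n n).subtype _, n < w.1.sum := fun w hw => by
      by_contra! hle
      refine (mem_sdiff.1 hw).2 (mem_subtype.2 (mem_boundedPartitions.2 ⟨w.2.1, fun x hx =>
        ⟨w.2.2 x hx, (List.le_sum_of_mem hx).trans hle⟩, hle⟩))
    simpa using eqUpToDegree_sum (f := g) (g := fun _ => 0) _ fun w hw =>
      eqUpToDegree_zero_of_lt_order <|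
        (ENat.natCast_lt_natCast.2 (hsum w hw)).trans_le (le_order_prod_map ht w.1)
  rw [← sum_sdiff hu, hsmall]
  simpa using hlarge.add ((eqUpToDegree_sum_boundedPartitions ht n n).trans
    (eqUpToDegree_eulerProduct ht le_rfl))

theorem hasProd_eulerProduct_blocks (ht : ∀ h : ℕ, (h : ℕ∞) ≤ (t h).order) {ℓ : ℕ}
    (hℓ : ℓ ≠ 0) :
    HasProd (fun k => ∏ c ∈ range ℓ, Ring.inverse (1 - t (k * ℓ + c + 1))) (eulerProduct t) := by
  refine tendsto_of_eqUpToDegree fun n => ?_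
  filter_upwards [eventually_ge_atTop (range (n + 1))] with u hu
  have hlarge : EqUpToDegree n (∏ k ∈ u \ range (n + 1), ∏ c ∈ range ℓ,
      Ring.inverse (1 - t (k * ℓ + c + 1))) 1 := by
    have hblock : ∀ k ∈ u \ range (n + 1), EqUpToDegree n
        (∏ c ∈ range ℓ, Ring.inverse (1 - t (k * ℓ + c + 1))) 1 := fun k hk => by
      have hk : n + 1 ≤ k := by simpa using (mem_sdiff.1 hk).2
      simpa using eqUpToDegree_prod (g := fun _ => 1) (range ℓ) fun c _ =>
        eqUpToDegree_inverse_one_sub_of_lt ht (h := k * ℓ + c + 1)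
          (by nlinarith [Nat.one_le_iff_ne_zero.2 hℓ])
    simpa using eqUpToDegree_prod (g := fun _ => 1) _ hblock
  rw [← prod_sdiff hu, ← prod_range_mul_eq_prod_prod (fun h => Ring.inverse (1 - t (h + 1)))]
  simpa using hlarge.mul (eqUpToDegree_eulerProduct ht
    (Nat.le_mul_of_pos_right _ (Nat.pos_of_ne_zero hℓ) |>.trans' n.le_succ))

end MvPowerSeries

section Colored

open MvPowerSeries
open LaurentPolynomial (T)

variable {ℓ : ℕ} {r : ℤ → ℕ}

/-- `q̃_c = y^{2 r_c} q_c`. -/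
def weightedVar (ℓ : ℕ) (r : ℤ → ℕ) (c : ℤ) : MvPowerSeries (ZMod ℓ) (LaurentPolynomial ℤ) :=
  C (T (2 * (r c : ℤ))) * X (c : ZMod ℓ)

/-- The weight `y^{-2p} q̃_a q̃_{a-1} ⋯ q̃_{a-h+1}` of a column of height `h`. -/
def columnWeight (ℓ : ℕ) (r : ℤ → ℕ) (a p : ℤ) (h : ℕ) :
    MvPowerSeries (ZMod ℓ) (LaurentPolynomial ℤ) :=
  C (T (-2 * p)) * ∏ b ∈ range h, weightedVar ℓ r (a - b)

theorem weightedVar_periodic (hr : Function.Periodic r ℓ) :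
    Function.Periodic (weightedVar ℓ r) ℓ := fun c => by
  simp [weightedVar, hr c]

theorem le_order_columnWeight (a p : ℤ) (h : ℕ) :
    (h : ℕ∞) ≤ (columnWeight ℓ r a p h).order := by
  have hvar : ∀ c, 1 ≤ (weightedVar ℓ r c).order := fun c =>
    one_le_order_iff_constCoeff_eq_zero.2 (by simp [weightedVar])
  calc (h : ℕ∞) = ∑ _b ∈ range h, 1 := by simp
    _ ≤ ∑ b ∈ range h, (weightedVar ℓ r (a - b)).order := sum_le_sum fun b _ => hvar _
    _ ≤ (∏ b ∈ range h, weightedVar ℓ r (a - b)).order := le_order_prod _ _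
    _ ≤ _ := le_add_self.trans le_order_mul

theorem columnWeight_mul_add (hr : Function.Periodic r ℓ) (a p : ℤ) (k c : ℕ) :
    columnWeight ℓ r a p (k * ℓ + c) =
      C (T (-2 * p)) * (∏ b ∈ range ℓ, weightedVar ℓ r b) ^ k *
        ∏ b ∈ range c, weightedVar ℓ r (a - b) := by
  have hwindow : ∀ j : ℕ, ∏ b ∈ range ℓ, weightedVar ℓ r (a - ((c + (j * ℓ + b) : ℕ) : ℤ)) =
      ∏ b ∈ range ℓ, weightedVar ℓ r b := fun j => by
    rw [← (weightedVar_periodic hr).prod_range_sub (a - c - j * ℓ)]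
    exact prod_congr rfl fun b _ => by push_cast; ring_nf
  rw [columnWeight, add_comm, prod_range_add, prod_range_mul_eq_prod_prod,
    prod_congr rfl fun j _ => hwindow j, prod_const, card_range]
  ring

theorem prod_colLens_columnWeight (hr : Function.Periodic r ℓ) (hℓ : ℓ ≠ 0) (a p : ℤ)
    (μ : YoungDiagram) :
    (μ.colLens.map (columnWeight ℓ r a p)).prod =
      C (T (2 * ((∑ c ∈ range ℓ, (ncolor ℓ a c μ : ℤ) * (r (c : ℤ) : ℤ)) - p * μ.ncols))) *
        ∏ c ∈ range ℓ, X ((c : ℤ) : ZMod ℓ) ^ ncolor ℓ a c μ := by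
  have hcol : columnWeight ℓ r a p =
      fun h => C (T (-2 * p)) * ∏ i ∈ range h, weightedVar ℓ r (a - i) := rfl
  rw [hcol, List.prod_map_mul, List.map_const', List.prod_replicate, μ.length_colLens,
    ← μ.prod_cells_eq_prod_colLens (fun i => weightedVar ℓ r (a - i)),
    prod_cells_eq_prod_pow_ncolor hℓ (weightedVar_periodic hr)]
  simp only [weightedVar, mul_pow, prod_mul_distrib, ← map_pow, ← map_prod, LaurentPolynomial.T_pow,
    ← LaurentPolynomial.T_sum, ← mul_assoc, ← map_mul, ← LaurentPolynomial.T_add]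
  congr 3
  rw [mul_sub, mul_sum]
  ring_nf

theorem isUnit_one_sub_columnWeight (a p : ℤ) {h : ℕ} (hh : 1 ≤ h) :
    IsUnit (1 - columnWeight ℓ r a p h) :=
  isUnit_one_sub_of_one_le_order ((Nat.one_le_cast.2 hh).trans (le_order_columnWeight a p h))

theorem prod_inverse_one_sub_columnWeight (hr : Function.Periodic r ℓ) (hℓ : ℓ ≠ 0) (a p : ℤ)
    (k : ℕ) :
    ∏ c ∈ range ℓ, Ring.inverse (1 - columnWeight ℓ r a p (k * ℓ + c + 1)) =
      Ring.inverse (1 - C (T (-2 * p)) * (∏ b ∈ range ℓ, weightedVar ℓ r b) ^ (k + 1)) *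
        ∏ c ∈ Icc 1 (ℓ - 1), Ring.inverse (1 - C (T (-2 * p)) *
          (∏ b ∈ range ℓ, weightedVar ℓ r b) ^ k * ∏ b ∈ range c, weightedVar ℓ r (a - b)) := by
  refine (prod_range_add_one_eq_mul_prod_Icc
    (fun c => Ring.inverse (1 - columnWeight ℓ r a p (k * ℓ + c))) hℓ).trans ?_
  rw [← add_one_mul, ← add_zero ((k + 1) * ℓ)]
  simp only [columnWeight_mul_add hr, prod_range_zero, mul_one]

end Colored

instance : DiscreteTopology (LaurentPolynomial ℤ) := ⟨rfl⟩

theorem stmt1_general (ℓ : ℕ) (hℓ : 2 ≤ ℓ) (r : ℤ → ℕ) (hr : ∀ b : ℤ, r (b + ℓ) = r b)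
    (a : ℤ) (p : ℤ) :
    let R := LaurentPolynomial ℤ
    let S := MvPowerSeries (ZMod ℓ) R
    let q : ℤ → S := fun c => MvPowerSeries.X ((c : ZMod ℓ))
    let qt : ℤ → S := fun c =>
      MvPowerSeries.C (σ := ZMod ℓ) (R := R) (LaurentPolynomial.T (2 * (r c : ℤ))) * q c
    let z : S := ∏ b ∈ Finset.range ℓ, qt (b : ℤ)
    let w : YoungDiagram → ℤ := fun μ =>
      (∑ c ∈ Finset.range ℓ, (ncolor ℓ a c μ : ℤ) * (r (c : ℤ) : ℤ)) - p * μ.ncols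
    let factor : ℕ → S := fun k =>
      Ring.inverse (1 - MvPowerSeries.C (σ := ZMod ℓ) (R := R) (LaurentPolynomial.T (-2 * p)) *
          z ^ (k + 1)) *
        ∏ c ∈ Finset.Icc 1 (ℓ - 1),
          Ring.inverse (1 - MvPowerSeries.C (σ := ZMod ℓ) (R := R) (LaurentPolynomial.T (-2 * p)) *
            z ^ k * ∏ b ∈ Finset.range c, qt (a - (b : ℤ)))
    (∀ k : ℕ, IsUnit (1 - MvPowerSeries.C (σ := ZMod ℓ) (R := R) (LaurentPolynomial.T (-2 * p)) *
        z ^ (k + 1))) ∧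
    (∀ k : ℕ, ∀ c ∈ Finset.Icc 1 (ℓ - 1),
      IsUnit (1 - MvPowerSeries.C (σ := ZMod ℓ) (R := R) (LaurentPolynomial.T (-2 * p)) *
        z ^ k * ∏ b ∈ Finset.range c, qt (a - (b : ℤ)))) ∧
    Multipliable factor ∧
    HasSum
      (fun μ : YoungDiagram =>
        MvPowerSeries.C (σ := ZMod ℓ) (R := R) (LaurentPolynomial.T (2 * w μ)) *
          ∏ c ∈ Finset.range ℓ, q (c : ℤ) ^ ncolor ℓ a c μ)
      (∏' k : ℕ, factor k) := by
  open MvPowerSeries in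
  intro R S q qt z w factor
  have hℓ0 : ℓ ≠ 0 := by omega
  have hblock : ∀ k c : ℕ, C (LaurentPolynomial.T (-2 * p)) * z ^ k *
      ∏ b ∈ range c, qt (a - b) = columnWeight ℓ r a p (k * ℓ + c) :=
    fun k c => (columnWeight_mul_add hr a p k c).symm
  have hfactor : factor =
      fun k => ∏ c ∈ range ℓ, Ring.inverse (1 - columnWeight ℓ r a p (k * ℓ + c + 1)) :=
    funext fun k => (prod_inverse_one_sub_columnWeight hr hℓ0 a p k).symm
  have hterm : (fun μ : YoungDiagram => C (LaurentPolynomial.T (2 * w μ)) *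
      ∏ c ∈ range ℓ, q c ^ ncolor ℓ a c μ) = fun μ => (μ.colLens.map (columnWeight ℓ r a p)).prod :=
    funext fun μ => (prod_colLens_columnWeight hr hℓ0 a p μ).symm
  have : T2Space S := WithPiTopology.instT2Space
  have ht := le_order_columnWeight (ℓ := ℓ) (r := r) a p
  have hprod := hasProd_eulerProduct_blocks ht hℓ0
  rw [← hfactor] at hprod
  refine ⟨fun k => ?_, fun k c hc => ?_, hprod.multipliable, ?_⟩
  · have hz := hblock (k + 1) 0
    rw [prod_range_zero, mul_one, add_zero] at hz
    rw [hz]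
    exact isUnit_one_sub_columnWeight a p (Nat.mul_pos k.succ_pos (Nat.pos_of_ne_zero hℓ0))
  · rw [hblock]
    exact isUnit_one_sub_columnWeight a p (by simp at hc; omega)
  · rw [hterm, hprod.tprod_eq]
    exact hasSum_prod_colLens ht

/-- Fix `ℓ ≥ 2`, an `ℓ`-periodic `r : ℤ → ℕ`, an index `a ∈ {0,…,ℓ−1}`, and an
integer `p`.  For a Young diagram `μ` with the `a`-coloring, let `n_c(μ)` be the number of
boxes of color `c` and `w(μ) := ∑_{c=0}^{ℓ−1} n_c(μ) r_c − p·col(μ)`.  In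
`(ℤ[y,y⁻¹])[[q_0, …, q_{ℓ−1}]]` (realized as `MvPowerSeries (ZMod ℓ) (LaurentPolynomial ℤ)`,
with the product topology, the coefficients discrete), writing `q̃_c := y^{2 r_c} q_c` and
`z := q̃_0 ⋯ q̃_{ℓ−1}`, the family over all Young diagrams `μ` of
`y^{2 w(μ)} ∏_{c=0}^{ℓ−1} q_c^{n_c(μ)}` has a sum, and this sum equals
`∏'_{k} (1 − y^{−2p} z^{k+1})⁻¹ ∏_{c=1}^{ℓ−1} (1 − y^{−2p} z^{k} q̃_a q̃_{a−1} ⋯ q̃_{a−c+1})⁻¹`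
(the factor indexed by `k : ℕ` is the paper's factor for `k+1`), each factor being a unit. -/
theorem stmt1 (ℓ : ℕ) (hℓ : 2 ≤ ℓ) (r : ℤ → ℕ) (hr : ∀ b : ℤ, r (b + ℓ) = r b)
    (a : ℤ) (ha : 0 ≤ a ∧ a < ℓ) (p : ℤ) :
    let R := LaurentPolynomial ℤ
    let S := MvPowerSeries (ZMod ℓ) R
    let q : ℤ → S := fun c => MvPowerSeries.X ((c : ZMod ℓ))
    let qt : ℤ → S := fun c =>
      MvPowerSeries.C (σ := ZMod ℓ) (R := R) (LaurentPolynomial.T (2 * (r c : ℤ))) * q c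
    let z : S := ∏ b ∈ Finset.range ℓ, qt (b : ℤ)
    let w : YoungDiagram → ℤ := fun μ =>
      (∑ c ∈ Finset.range ℓ, (ncolor ℓ a c μ : ℤ) * (r (c : ℤ) : ℤ)) - p * μ.ncols
    let factor : ℕ → S := fun k =>
      Ring.inverse (1 - MvPowerSeries.C (σ := ZMod ℓ) (R := R) (LaurentPolynomial.T (-2 * p)) *
          z ^ (k + 1)) *
        ∏ c ∈ Finset.Icc 1 (ℓ - 1),
          Ring.inverse (1 - MvPowerSeries.C (σ := ZMod ℓ) (R := R) (LaurentPolynomial.T (-2 * p)) *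
            z ^ k * ∏ b ∈ Finset.range c, qt (a - (b : ℤ)))
    (∀ k : ℕ, IsUnit (1 - MvPowerSeries.C (σ := ZMod ℓ) (R := R) (LaurentPolynomial.T (-2 * p)) *
        z ^ (k + 1))) ∧
    (∀ k : ℕ, ∀ c ∈ Finset.Icc 1 (ℓ - 1),
      IsUnit (1 - MvPowerSeries.C (σ := ZMod ℓ) (R := R) (LaurentPolynomial.T (-2 * p)) *
        z ^ k * ∏ b ∈ Finset.range c, qt (a - (b : ℤ)))) ∧
    Multipliable factor ∧
    HasSum
      (fun μ : YoungDiagram =>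
        MvPowerSeries.C (σ := ZMod ℓ) (R := R) (LaurentPolynomial.T (2 * w μ)) *
          ∏ c ∈ Finset.range ℓ, q (c : ℤ) ^ ncolor ℓ a c μ)
      (∏' k : ℕ, factor k) :=
  stmt1_general ℓ hℓ r hr a p
end
end

section
/- Let L ≥ 1, let m_1, …, m_L ≥ 1 be integers, let 0 < s_1 < ⋯ < s_L be integers, and set ℓ := m_1 + ⋯ + m_L. For 1 ≤ c ≤ ℓ let i(c) ∈ {1,…,L} be the unique block index with m_1+⋯+m_{i(c)−1} < c ≤ m_1+⋯+m_{i(c)}, and put R(c) := s_{i(c)}. Let K be a field, let y ∈ K be nonzero, let z₁, z₂ ∈ K, and let u_1, …, u_ℓ ∈ K be nonzero. Then ∏_{1 ≤ a < c ≤ ℓ} [∏_{t=1}^{R(c)} (1 − y^{−2t} z₁ u_a u_c^{−1})] · [∏_{t=1}^{R(a)} (1 − y^{−2t} z₂ u_a^{−1} u_c)] = (∏_{i=1}^{L} ∏_{a < c, both in block i} ∏_{t=1}^{s_i} (1 − y^{−2t} z₁ u_a u_c^{−1})(1 − y^{−2t} z₂ u_a^{−1} u_c)) · (∏_{1 ≤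 i < j ≤ L} ∏_{a in block i, c in block j} [∏_{t=1}^{s_j−s_i} (1 − y^{−2t} z₁ u_a u_c^{−1})] · [∏_{t=1}^{s_i} (1 − y^{−2t} y^{2(s_i−s_j)} z₁ u_a u_c^{−1})(1 − y^{−2t} z₂ u_a^{−1} u_c)]). (This is the k-th factor form of Proposition 5.1 of the paper, identifying the affine Laumon partition function of type r = (s_L^{m_L}, …, s_1^{m_1}) with the product of the refined W-algebra Verma character and the β-subalgebra characters; here z₁ and z₂ stand for z^k and z^{k−1}.) -/
open Finset

private lemma block_decomp {K : Type*} [CommMonoid K] (g : ℕ → K) (M : ℕ → ℕ)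
    (hMmono : Monotone M) (hM0 : M 0 = 0) (n : ℕ) :
    ∏ c ∈ Finset.Ioc 0 (M n), g c
      = ∏ i ∈ Finset.Ioc 0 n, ∏ c ∈ Finset.Ioc (M (i - 1)) (M i), g c := by
  induction n with
  | zero => simp [hM0]
  | succ n ih =>
    have h0n : (0 : ℕ) ≤ M n := Nat.zero_le _
    rw [← Finset.prod_Ioc_consecutive g h0n (hMmono (Nat.le_succ n)), ih,
      Finset.prod_Ioc_succ_top (Nat.zero_le n)]
    simp

private lemma reindex {K : Type*} [CommMonoid K] (L : ℕ) (M : ℕ → ℕ) (hM0 : M 0 = 0)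
    (hMmono : Monotone M) (F : ℕ → ℕ → K) :
    (∏ c ∈ Finset.Icc 1 (M L), ∏ a ∈ Finset.Ico 1 c, F c a) =
    (∏ i ∈ Finset.Icc 1 L, ∏ c ∈ Finset.Icc (M (i - 1) + 1) (M i),
        ∏ a ∈ Finset.Ico (M (i - 1) + 1) c, F c a) *
    (∏ i ∈ Finset.Icc 1 L, ∏ j ∈ Finset.Icc (i + 1) L,
        ∏ a ∈ Finset.Icc (M (i - 1) + 1) (M i),
          ∏ c ∈ Finset.Icc (M (j - 1) + 1) (M j), F c a) := by
  have hIoc : ∀ a b : ℕ, Finset.Icc (a + 1) b = Finset.Ioc a b := by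
    intro a b; ext x; simp only [Finset.mem_Icc, Finset.mem_Ioc]; omega
  have h1 : ∀ n : ℕ, Finset.Icc 1 n = Finset.Ioc 0 n := fun n => hIoc 0 n
  simp only [h1, hIoc]
  calc
    (∏ c ∈ Finset.Ioc 0 (M L), ∏ a ∈ Finset.Ico 1 c, F c a)
        = ∏ i ∈ Finset.Ioc 0 L, ∏ c ∈ Finset.Ioc (M (i - 1)) (M i),
            ∏ a ∈ Finset.Ico 1 c, F c a :=
      block_decomp _ M hMmono hM0 L
    _ = ∏ i ∈ Finset.Ioc 0 L, ∏ c ∈ Finset.Ioc (M (i - 1)) (M i),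
          ((∏ a ∈ Finset.Ico (M (i - 1) + 1) c, F c a) *
           (∏ i' ∈ Finset.Ioc 0 (i - 1), ∏ a ∈ Finset.Ioc (M (i' - 1)) (M i'), F c a)) := by
      refine Finset.prod_congr rfl fun i hi => Finset.prod_congr rfl fun c hc => ?_
      simp only [Finset.mem_Ioc] at hi hc
      have h2 : (1 : ℕ) ≤ M (i - 1) + 1 := by omega
      have h3 : M (i - 1) + 1 ≤ c := by omega
      rw [← Finset.prod_Ico_consecutive (fun a => F c a) h2 h3, mul_comm]
      congr 1
      rw [Finset.Ico_add_one_right_eq_Icc, h1]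
      exact block_decomp _ M hMmono hM0 (i - 1)
    _ = (∏ i ∈ Finset.Ioc 0 L, ∏ c ∈ Finset.Ioc (M (i - 1)) (M i),
            ∏ a ∈ Finset.Ico (M (i - 1) + 1) c, F c a) *
        (∏ i ∈ Finset.Ioc 0 L, ∏ c ∈ Finset.Ioc (M (i - 1)) (M i),
            ∏ i' ∈ Finset.Ioc 0 (i - 1),
              ∏ a ∈ Finset.Ioc (M (i' - 1)) (M i'), F c a) := by
      simp only [Finset.prod_mul_distrib]
    _ = (∏ i ∈ Finset.Ioc 0 L, ∏ c ∈ Finset.Ioc (M (i - 1)) (M i),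
            ∏ a ∈ Finset.Ico (M (i - 1) + 1) c, F c a) *
        (∏ i ∈ Finset.Ioc 0 L, ∏ j ∈ Finset.Ioc i L,
            ∏ a ∈ Finset.Ioc (M (i - 1)) (M i),
              ∏ c ∈ Finset.Ioc (M (j - 1)) (M j), F c a) := by
      congr 1
      calc
        (∏ i ∈ Finset.Ioc 0 L, ∏ c ∈ Finset.Ioc (M (i - 1)) (M i),
            ∏ i' ∈ Finset.Ioc 0 (i - 1),
              ∏ a ∈ Finset.Ioc (M (i' - 1)) (M i'), F c a)
            = ∏ i ∈ Finset.Ioc 0 L, ∏ i' ∈ Finset.Ioc 0 (i - 1),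
                ∏ c ∈ Finset.Ioc (M (i - 1)) (M i),
                  ∏ a ∈ Finset.Ioc (M (i' - 1)) (M i'), F c a := by
          refine Finset.prod_congr rfl fun i _ => ?_
          exact Finset.prod_comm
        _ = ∏ i' ∈ Finset.Ioc 0 L, ∏ i ∈ Finset.Ioc i' L,
              ∏ c ∈ Finset.Ioc (M (i - 1)) (M i),
                ∏ a ∈ Finset.Ioc (M (i' - 1)) (M i'), F c a := by
          refine Finset.prod_comm' fun x y => ?_
          simp only [Finset.mem_Ioc]; omega
        _ = ∏ i ∈ Finset.Ioc 0 L, ∏ j ∈ Finset.Ioc i L,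
              ∏ a ∈ Finset.Ioc (M (i - 1)) (M i),
                ∏ c ∈ Finset.Ioc (M (j - 1)) (M j), F c a := by
          refine Finset.prod_congr rfl fun i _ => Finset.prod_congr rfl fun j _ => ?_
          exact Finset.prod_comm

/-- k-th factor form of Proposition 5.1: Let `L ≥ 1`, `m_1, …, m_L ≥ 1`,
`0 < s_1 < ⋯ < s_L`, and `ℓ := m_1 + ⋯ + m_L`. For `1 ≤ c ≤ ℓ`, `B c ∈ {1,…,L}` is the
unique block index with `m_1+⋯+m_{B c −1} < c ≤ m_1+⋯+m_{B c}` (introduced as a function `B`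
together with its defining property), and `R(c) := s_{B c}`. Block `i` is the interval
`{m_1+⋯+m_{i−1}+1, …, m_1+⋯+m_i}`. Let `K` be a field, `y ≠ 0`, `z₁ z₂ : K`, and
`u_1, …, u_ℓ ∈ K` nonzero. Then
`∏_{1 ≤ a < c ≤ ℓ} [∏_{t=1}^{R(c)} (1 − y^{−2t} z₁ u_a u_c^{−1})]
                 · [∏_{t=1}^{R(a)} (1 − y^{−2t} z₂ u_a^{−1} u_c)]`
equals the product of the within-block factors and the between-block factors displayed in the
statement. -/
theorem stmt3 (L : ℕ) (hL : 1 ≤ L) (m s : ℕ → ℕ)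
    (hm : ∀ i, 1 ≤ i → i ≤ L → 1 ≤ m i)
    (hs1 : 0 < s 1)
    (hs : ∀ i, 1 ≤ i → i < L → s i < s (i + 1))
    (K : Type*) [Field K] (y : K) (hy : y ≠ 0) (z₁ z₂ : K)
    (u : ℕ → K) (hu : ∀ c, 1 ≤ c → c ≤ ∑ j ∈ Finset.Icc 1 L, m j → u c ≠ 0)
    (B : ℕ → ℕ)
    (hB : ∀ c, 1 ≤ c → c ≤ ∑ j ∈ Finset.Icc 1 L, m j →
      1 ≤ B c ∧ B c ≤ L ∧ (∑ j ∈ Finset.Icc 1 (B c - 1), m j) < c ∧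
        c ≤ ∑ j ∈ Finset.Icc 1 (B c), m j) :
    (∏ c ∈ Finset.Icc 1 (∑ j ∈ Finset.Icc 1 L, m j), ∏ a ∈ Finset.Ico 1 c,
      (∏ t ∈ Finset.Icc 1 (s (B c)),
        (1 - y ^ (-(2 * (t : ℤ))) * z₁ * u a * (u c)⁻¹)) *
      (∏ t ∈ Finset.Icc 1 (s (B a)),
        (1 - y ^ (-(2 * (t : ℤ))) * z₂ * (u a)⁻¹ * u c)))
    =
    (∏ i ∈ Finset.Icc 1 L,
      ∏ c ∈ Finset.Icc ((∑ j ∈ Finset.Icc 1 (i - 1), m j) + 1) (∑ j ∈ Finset.Icc 1 i, m j),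
        ∏ a ∈ Finset.Ico ((∑ j ∈ Finset.Icc 1 (i - 1), m j) + 1) c,
          ∏ t ∈ Finset.Icc 1 (s i),
            (1 - y ^ (-(2 * (t : ℤ))) * z₁ * u a * (u c)⁻¹) *
            (1 - y ^ (-(2 * (t : ℤ))) * z₂ * (u a)⁻¹ * u c))
    *
    (∏ i ∈ Finset.Icc 1 L, ∏ j ∈ Finset.Icc (i + 1) L,
      ∏ a ∈ Finset.Icc ((∑ j' ∈ Finset.Icc 1 (i - 1), m j') + 1) (∑ j' ∈ Finset.Icc 1 i, m j'),
        ∏ c ∈ Finset.Icc ((∑ j' ∈ Finset.Icc 1 (j - 1), m j') + 1) (∑ j' ∈ Finset.Icc 1 j, m j'),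
          (∏ t ∈ Finset.Icc 1 (s j - s i),
            (1 - y ^ (-(2 * (t : ℤ))) * z₁ * u a * (u c)⁻¹)) *
          (∏ t ∈ Finset.Icc 1 (s i),
            (1 - y ^ (-(2 * (t : ℤ))) * y ^ ((2 : ℤ) * ((s i : ℤ) - (s j : ℤ))) * z₁ *
                u a * (u c)⁻¹) *
            (1 - y ^ (-(2 * (t : ℤ))) * z₂ * (u a)⁻¹ * u c))) := by
  classical
  set M : ℕ → ℕ := fun n => ∑ j ∈ Finset.Icc 1 n, m j with hMdef
  have hMn : ∀ n, (∑ j ∈ Finset.Icc 1 n, m j) = M n := fun n => rfl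
  simp only [hMn] at hB ⊢
  have hM0 : M 0 = 0 := by simp [hMdef]
  have hMmono : Monotone M := fun a b h =>
    Finset.sum_le_sum_of_subset (Finset.Icc_subset_Icc_right h)
  have hMstep : ∀ i : ℕ, 1 ≤ i → M i = M (i - 1) + m i := by
    intro i hi
    rcases i with _ | k
    · omega
    · simpa [hMdef] using Finset.sum_Icc_succ_top (by omega : 1 ≤ k + 1) m
  have hBeq : ∀ i c, 1 ≤ i → i ≤ L → M (i - 1) < c → c ≤ M i → B c = i := by
    intro i c h1 h2 hc1 hc2
    have hc1' : 1 ≤ c := by omega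
    have hcL : c ≤ M L := le_trans hc2 (hMmono h2)
    obtain ⟨hb1, hb2, hb3, hb4⟩ := hB c hc1' hcL
    by_contra hne
    rcases Nat.lt_or_ge (B c) i with h | h
    · have : M (B c) ≤ M (i - 1) := hMmono (by omega)
      omega
    · have : M i ≤ M (B c - 1) := hMmono (by omega)
      omega
  have hsmono : ∀ j, j ≤ L → ∀ i, 1 ≤ i → i < j → s i < s j := by
    intro j hj
    induction j with
    | zero => omega
    | succ j ih =>
      intro i hi hij
      rcases Nat.lt_succ_iff_lt_or_eq.mp hij with h | h
      · exact lt_trans (ih (by omega) i hi h) (hs j (by omega) (by omega))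
      · subst h; exact hs i hi (by omega)
  have hsplit : ∀ (i j a c : ℕ), 1 ≤ i → i < j → j ≤ L →
      (∏ t ∈ Finset.Icc 1 (s j), (1 - y ^ (-(2 * (t : ℤ))) * z₁ * u a * (u c)⁻¹)) =
      (∏ t ∈ Finset.Icc 1 (s j - s i), (1 - y ^ (-(2 * (t : ℤ))) * z₁ * u a * (u c)⁻¹)) *
      (∏ t ∈ Finset.Icc 1 (s i),
        (1 - y ^ (-(2 * (t : ℤ))) * y ^ ((2 : ℤ) * ((s i : ℤ) - (s j : ℤ))) * z₁ *
          u a * (u c)⁻¹)) := by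
    intro i j a c h1 h2 h3
    have hsij : s i < s j := hsmono j h3 i h1 h2
    rw [← Finset.Ico_add_one_right_eq_Icc 1 (s j),
      ← Finset.prod_Ico_consecutive _ (by omega : 1 ≤ (s j - s i) + 1)
        (by omega : (s j - s i) + 1 ≤ s j + 1),
      Finset.Ico_add_one_right_eq_Icc, show (s j - s i) + 1 = 1 + (s j - s i) from by omega,
      show s j + 1 = (s i + 1) + (s j - s i) from by omega,
      ← Finset.prod_Ico_add' _ 1 (s i + 1) (s j - s i), Finset.Ico_add_one_right_eq_Icc]
    congr 1
    refine Finset.prod_congr rfl fun t ht => ?_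
    have he : (-(2 * ((t + (s j - s i) : ℕ) : ℤ))) =
        (-(2 * (t : ℤ))) + ((2 : ℤ) * ((s i : ℤ) - (s j : ℤ))) := by
      push_cast
      omega
    rw [he, zpow_add₀ hy]
  refine (reindex L M hM0 hMmono fun c a =>
    (∏ t ∈ Finset.Icc 1 (s (B c)), (1 - y ^ (-(2 * (t : ℤ))) * z₁ * u a * (u c)⁻¹)) *
    (∏ t ∈ Finset.Icc 1 (s (B a)), (1 - y ^ (-(2 * (t : ℤ))) * z₂ * (u a)⁻¹ * u c))).trans ?_
  congr 1
  · -- within-block part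
    refine Finset.prod_congr rfl fun i hi => Finset.prod_congr rfl fun c hc =>
      Finset.prod_congr rfl fun a ha => ?_
    simp only [Finset.mem_Icc, Finset.mem_Ico] at hi hc ha
    have hBc : B c = i := hBeq i c hi.1 hi.2 (by omega) hc.2
    have hBa : B a = i := hBeq i a hi.1 hi.2 (by omega) (by omega)
    rw [hBc, hBa, ← Finset.prod_mul_distrib]
  · -- between-block part
    refine Finset.prod_congr rfl fun i hi => Finset.prod_congr rfl fun j hj =>
      Finset.prod_congr rfl fun a ha => Finset.prod_congr rfl fun c hc => ?_
    simp only [Finset.mem_Icc] at hi hj ha hc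
    have hBa : B a = i := hBeq i a hi.1 hi.2 (by omega) ha.2
    have hBc : B c = j := hBeq j c (by omega) hj.2 (by omega) hc.2
    rw [hBa, hBc, hsplit i j a c hi.1 (by omega) hj.2, mul_assoc]
    congr 1
    rw [← Finset.prod_mul_distrib]
end

section
/- Fix an integer ℓ ≥ 2 and natural numbers r_0, …, r_{ℓ−1} with r := r_0 + ⋯ + r_{ℓ−1} ≥ 1. For 1 ≤ α ≤ r let a(α) ∈ {0,…,ℓ−1} be the unique index with r_0+⋯+r_{a(α)−1} < α ≤ r_0+⋯+r_{a(α)}. Fix β ∈ {1,…,r} and a Young diagram μ, and let n_c(μ) denote the number of boxes of color c in the a(β)-coloring of μ. Then ∑_{α=1}^{β−1} #{(i,j) ∈ μ : μ'_i − j ≡ a(β) − a(α) (mod ℓ)} + ∑_{α=β}^{r} #{(i,j) ∈ μ : j ≤ μ'_i − 1 and μ'_i − j ≡ a(β) − a(α) (mod ℓ)} = ∑_{c=0}^{ℓ−1} n_c(μ) r_c − col(μ) · (r_0 + ⋯ + r_{a(β)} − β + 1). (This is the combinatorial content of Lemma 3.1 of the paper, computing the Morse index w(μ_β) of a torus-fixed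 point of an affine Laumon space.) -/
namespace Stmt4Aux

open Finset

lemma mod_iff (ℓ : ℕ) (a L b : ℤ) :
    L % ℓ = (a - b) % ℓ ↔ (a - L) % ℓ = b % ℓ := by
  rw [Int.emod_eq_emod_iff_emod_sub_eq_zero, Int.emod_eq_emod_iff_emod_sub_eq_zero]
  constructor <;> intro h
  · have hd := Int.dvd_of_emod_eq_zero h
    refine Int.emod_eq_zero_of_dvd ?_
    rw [show a - L - b = -(L - (a - b)) by ring]
    exact dvd_neg.mpr hd
  · have hd := Int.dvd_of_emod_eq_zero h
    refine Int.emod_eq_zero_of_dvd ?_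
    rw [show L - (a - b) = -(a - L - b) by ring]
    exact dvd_neg.mpr hd

lemma sum_pick (ℓ : ℕ) (hℓ : 0 < ℓ) (r : ℕ → ℕ) (t : ℤ) :
    ∑ b ∈ Finset.range ℓ, (r b : ℤ) * (if t % ℓ = (b : ℤ) % ℓ then 1 else 0)
      = (r (t % ℓ).toNat : ℤ) := by
  have h0 : (0 : ℤ) < ℓ := by exact_mod_cast hℓ
  have h1 : 0 ≤ t % ℓ := Int.emod_nonneg t (by omega)
  have h2 : t % ℓ < ℓ := Int.emod_lt_of_pos t h0
  rw [Finset.sum_eq_single ((t % ℓ).toNat)]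
  · rw [if_pos, mul_one]
    rw [Int.toNat_of_nonneg h1, Int.emod_emod_of_dvd _ dvd_rfl]
  · intro b hb hne
    rw [if_neg, mul_zero]
    intro hcon
    rw [Finset.mem_range] at hb
    have hbe : ((b : ℤ)) % ℓ = b := Int.emod_eq_of_lt (by positivity) (by exact_mod_cast hb)
    rw [hbe] at hcon
    omega
  · intro h
    exact absurd (Finset.mem_range.mpr (by omega)) h

lemma S_mono (r : ℕ → ℕ) {m n : ℕ} (h : m ≤ n) :
    ∑ b ∈ Finset.range m, r b ≤ ∑ b ∈ Finset.range n, r b :=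
  Finset.sum_le_sum_of_subset (Finset.range_subset_range.mpr h)

lemma A_eq (ℓ : ℕ) (r : ℕ → ℕ) (A : ℕ → ℕ)
    (hA : ∀ α, 1 ≤ α → α ≤ ∑ b ∈ Finset.range ℓ, r b →
      A α < ℓ ∧ (∑ b ∈ Finset.range (A α), r b) < α ∧ α ≤ ∑ b ∈ Finset.range (A α + 1), r b)
    {b α : ℕ} (hb : b < ℓ)
    (h1 : ∑ b' ∈ Finset.range b, r b' < α)
    (h2 : α ≤ ∑ b' ∈ Finset.range (b + 1), r b') : A α = b := by
  have hα1 : 1 ≤ α := by omega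
  have hα2 : α ≤ ∑ b ∈ Finset.range ℓ, r b := h2.trans (S_mono r hb)
  obtain ⟨h3, h4, h5⟩ := hA α hα1 hα2
  rcases Nat.lt_trichotomy (A α) b with hlt | heq | hgt
  · have := S_mono r (show A α + 1 ≤ b from hlt)
    omega
  · exact heq
  · have := S_mono r (show b + 1 ≤ A α from hgt)
    omega

lemma sum_group (ℓ : ℕ) (r : ℕ → ℕ) (A : ℕ → ℕ)
    (hA : ∀ α, 1 ≤ α → α ≤ ∑ b ∈ Finset.range ℓ, r b →
      A α < ℓ ∧ (∑ b ∈ Finset.range (A α), r b) < α ∧ α ≤ ∑ b ∈ Finset.range (A α + 1), r b)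
    (F : ℕ → ℤ) :
    ∑ α ∈ Finset.Ioc 0 (∑ b ∈ Finset.range ℓ, r b), F (A α)
      = ∑ b ∈ Finset.range ℓ, (r b : ℤ) * F b := by
  suffices H : ∀ n, n ≤ ℓ → ∑ α ∈ Finset.Ioc 0 (∑ b ∈ Finset.range n, r b), F (A α)
      = ∑ b ∈ Finset.range n, (r b : ℤ) * F b from H ℓ le_rfl
  intro n hn
  induction n with
  | zero => simp
  | succ n ih =>
    rw [Finset.sum_range_succ (f := fun b => (r b : ℤ) * F b), ← ih (by omega),
      ← Finset.sum_Ioc_consecutive (fun α => F (A α)) (Nat.zero_le _) (S_mono r (Nat.le_succ n))]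
    congr 1
    rw [Finset.sum_congr rfl (fun α hα => by
      rw [A_eq ℓ r A hA (by omega) (Finset.mem_Ioc.mp hα).1 (Finset.mem_Ioc.mp hα).2])]
    rw [Finset.sum_const, Nat.card_Ioc, Finset.sum_range_succ]
    simp [nsmul_eq_mul]

lemma count_tail (ℓ : ℕ) (r : ℕ → ℕ) (A : ℕ → ℕ)
    (hA : ∀ α, 1 ≤ α → α ≤ ∑ b ∈ Finset.range ℓ, r b →
      A α < ℓ ∧ (∑ b ∈ Finset.range (A α), r b) < α ∧ α ≤ ∑ b ∈ Finset.range (A α + 1), r b)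
    (β : ℕ) (hβ1 : 1 ≤ β) (hβ2 : β ≤ ∑ b ∈ Finset.range ℓ, r b) :
    ((Finset.Icc β (∑ b ∈ Finset.range ℓ, r b)).filter (fun α => A α = A β)).card
      = ∑ b ∈ Finset.range (A β + 1), r b + 1 - β := by
  obtain ⟨h3, h4, h5⟩ := hA β hβ1 hβ2
  have he : (Finset.Icc β (∑ b ∈ Finset.range ℓ, r b)).filter (fun α => A α = A β)
      = Finset.Icc β (∑ b ∈ Finset.range (A β + 1), r b) := by
    ext α
    simp only [Finset.mem_filter, Finset.mem_Icc]
    constructor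
    · rintro ⟨⟨hh1, hh2⟩, hh3⟩
      refine ⟨hh1, ?_⟩
      have := (hA α (by omega) hh2).2.2
      rwa [hh3] at this
    · rintro ⟨hh1, hh2⟩
      exact ⟨⟨hh1, hh2.trans (S_mono r h3)⟩, A_eq ℓ r A hA h3 (by omega) hh2⟩
  rw [he, Nat.card_Icc]

lemma cells_filter_card (μ : YoungDiagram) (P : ℕ × ℕ → Prop) [DecidablePred P] :
    ((μ.cells.filter P).card : ℤ)
      = ∑ i ∈ Finset.range μ.ncols, ∑ x ∈ Finset.range (μ.colLen i),
          (if P (x, i) then (1 : ℤ) else 0) := by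
  rw [Finset.card_filter]
  push_cast
  rw [Finset.sum_sigma']
  refine Finset.sum_nbij' (fun c => (⟨c.2, c.1⟩ : (_ : ℕ) × ℕ)) (fun p => (p.2, p.1))
    ?_ ?_ ?_ ?_ ?_
  · rintro ⟨x, i⟩ hc
    rw [YoungDiagram.mem_cells] at hc
    have h1 : x < μ.colLen i := YoungDiagram.mem_iff_lt_colLen.mp hc
    have h2 : (0, i) ∈ μ := μ.up_left_mem (Nat.zero_le x) le_rfl hc
    simp only [Finset.mem_sigma, Finset.mem_range]
    exact ⟨YoungDiagram.mem_iff_lt_rowLen.mp h2, h1⟩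
  · rintro ⟨i, x⟩ hp
    simp only [Finset.mem_sigma, Finset.mem_range] at hp
    rw [YoungDiagram.mem_cells]
    exact YoungDiagram.mem_iff_lt_colLen.mpr hp.2
  · rintro ⟨x, i⟩ _; rfl
  · rintro ⟨i, x⟩ _; rfl
  · rintro ⟨x, i⟩ _; rfl

end Stmt4Aux

/-- Lemma 3.1, Morse index: Fix `ℓ ≥ 2` and naturals `r_0, …, r_{ℓ−1}` with
`r := r_0 + ⋯ + r_{ℓ−1} ≥ 1`.  For `1 ≤ α ≤ r`, `A α ∈ {0,…,ℓ−1}` is the unique index with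
`r_0+⋯+r_{A α − 1} < α ≤ r_0+⋯+r_{A α}` (introduced here as a function `A` together with its
defining property).  Fix `β ∈ {1,…,r}` and a Young diagram `μ`; the `a(β)`-coloring gives a
box `(i,j)` (paper convention: `i` column, `j` row, 1-indexed; Mathlib cell `cell` has
`j = cell.1 + 1`, `i = cell.2 + 1`, `μ'_i = μ.colLen cell.2`) the color `≡ A β − j + 1 (mod ℓ)`,
and `n_c(μ)` counts boxes of color `c`.  Then
`∑_{α=1}^{β−1} #{(i,j) ∈ μ : μ'_i − j ≡ A β − A α (mod ℓ)}
 + ∑_{α=β}^{r} #{(i,j) ∈ μ : j ≤ μ'_i − 1, μ'_i − j ≡ A β − A α (mod ℓ)}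
 = ∑_{c=0}^{ℓ−1} n_c(μ) r_c − col(μ)·(r_0 + ⋯ + r_{A β} − β + 1)`. -/
theorem stmt4 (ℓ : ℕ) (hℓ : 2 ≤ ℓ) (r : ℕ → ℕ) (hr : 1 ≤ ∑ b ∈ Finset.range ℓ, r b)
    (A : ℕ → ℕ)
    (hA : ∀ α, 1 ≤ α → α ≤ ∑ b ∈ Finset.range ℓ, r b →
      A α < ℓ ∧ (∑ b ∈ Finset.range (A α), r b) < α ∧ α ≤ ∑ b ∈ Finset.range (A α + 1), r b)
    (β : ℕ) (hβ1 : 1 ≤ β) (hβ2 : β ≤ ∑ b ∈ Finset.range ℓ, r b)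
    (μ : YoungDiagram) :
    ((∑ α ∈ Finset.Ico 1 β,
        (μ.cells.filter fun cell =>
          ((μ.colLen cell.2 : ℤ) - ((cell.1 : ℤ) + 1)) % ℓ
            = ((A β : ℤ) - (A α : ℤ)) % ℓ).card)
      + ∑ α ∈ Finset.Icc β (∑ b ∈ Finset.range ℓ, r b),
        (μ.cells.filter fun cell =>
          cell.1 + 1 ≤ μ.colLen cell.2 - 1 ∧
          ((μ.colLen cell.2 : ℤ) - ((cell.1 : ℤ) + 1)) % ℓ
            = ((A β : ℤ) - (A α : ℤ)) % ℓ).card : ℤ)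
    = (∑ c ∈ Finset.range ℓ,
        ((μ.cells.filter fun cell =>
            ((A β : ℤ) - (cell.1 : ℤ)) % ℓ = (c : ℤ) % ℓ).card : ℤ) * (r c : ℤ))
      - (μ.ncols : ℤ) * ((∑ b ∈ Finset.range (A β + 1), (r b : ℤ)) - (β : ℤ) + 1) := by
  classical
  obtain ⟨hAβℓ, hAβ1, hAβ2⟩ := hA β hβ1 hβ2
  have hℓ0 : 0 < ℓ := by omega
  have hcolpos : ∀ i ∈ Finset.range μ.ncols, 1 ≤ μ.colLen i := by
    intro i hi
    rw [Finset.mem_range, YoungDiagram.ncols] at hi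
    have h1 := YoungDiagram.mem_iff_lt_rowLen.mpr hi
    have h2 := YoungDiagram.mem_iff_lt_colLen.mp h1
    omega
  push_cast
  simp only [Stmt4Aux.cells_filter_card]
  -- per-column, per-α splitting of the leg-≥1 sum
  have key_inner : ∀ α, A α < ℓ → ∀ i ∈ Finset.range μ.ncols,
      (∑ x ∈ Finset.range (μ.colLen i),
        if ((μ.colLen i : ℤ) - ((x : ℤ) + 1)) % ℓ = ((A β : ℤ) - (A α : ℤ)) % ℓ
          then (1:ℤ) else 0)
      = (∑ x ∈ Finset.range (μ.colLen i),
          if x + 1 ≤ μ.colLen i - 1 ∧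
              ((μ.colLen i : ℤ) - ((x : ℤ) + 1)) % ℓ = ((A β : ℤ) - (A α : ℤ)) % ℓ
            then (1:ℤ) else 0)
        + (if A α = A β then 1 else 0) := by
    intro α hαℓ i hi
    obtain ⟨m, hm⟩ : ∃ m, μ.colLen i = m + 1 :=
      ⟨μ.colLen i - 1, by have := hcolpos i hi; omega⟩
    rw [hm, Finset.sum_range_succ, Finset.sum_range_succ]
    have hmid : ∀ x ∈ Finset.range m,
        (if (((m+1 : ℕ) : ℤ) - ((x : ℤ) + 1)) % ℓ = ((A β : ℤ) - (A α : ℤ)) % ℓ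
          then (1:ℤ) else 0)
        = if x + 1 ≤ m + 1 - 1 ∧
              (((m+1 : ℕ) : ℤ) - ((x : ℤ) + 1)) % ℓ = ((A β : ℤ) - (A α : ℤ)) % ℓ
            then (1:ℤ) else 0 := by
      intro x hx
      rw [Finset.mem_range] at hx
      have hle : x + 1 ≤ m := by omega
      simp [hle]
    rw [Finset.sum_congr rfl hmid]
    have hAiff : (((m+1 : ℕ) : ℤ) - ((m : ℤ) + 1)) % ℓ = ((A β : ℤ) - (A α : ℤ)) % ℓ
        ↔ A α = A β := by
      have e0 : (((m+1 : ℕ) : ℤ) - ((m : ℤ) + 1)) = 0 := by push_cast; ring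
      rw [e0, Int.zero_emod, eq_comm, ← Int.emod_eq_emod_iff_emod_sub_eq_zero,
        Int.emod_eq_of_lt (by positivity) (by exact_mod_cast hAβℓ),
        Int.emod_eq_of_lt (by positivity) (by exact_mod_cast hαℓ)]
      constructor
      · intro h; exact_mod_cast h.symm
      · intro h; exact_mod_cast h.symm
    have h1 : (if (((m+1 : ℕ) : ℤ) - ((m : ℤ) + 1)) % ℓ = ((A β : ℤ) - (A α : ℤ)) % ℓ
        then (1:ℤ) else 0) = if A α = A β then 1 else 0 := if_congr hAiff rfl rfl
    have h2 : (if m + 1 ≤ m + 1 - 1 ∧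
          (((m+1 : ℕ) : ℤ) - ((m : ℤ) + 1)) % ℓ = ((A β : ℤ) - (A α : ℤ)) % ℓ
        then (1:ℤ) else 0) = 0 := by
      rw [if_neg]; rintro ⟨h, -⟩; omega
    rw [h1, h2]; ring
  have hD : ∀ α, A α < ℓ →
      (∑ i ∈ Finset.range μ.ncols, ∑ x ∈ Finset.range (μ.colLen i),
        if ((μ.colLen i : ℤ) - ((x : ℤ) + 1)) % ℓ = ((A β : ℤ) - (A α : ℤ)) % ℓ
          then (1:ℤ) else 0)
      = (∑ i ∈ Finset.range μ.ncols, ∑ x ∈ Finset.range (μ.colLen i),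
          if x + 1 ≤ μ.colLen i - 1 ∧
              ((μ.colLen i : ℤ) - ((x : ℤ) + 1)) % ℓ = ((A β : ℤ) - (A α : ℤ)) % ℓ
            then (1:ℤ) else 0)
        + (μ.ncols : ℤ) * (if A α = A β then 1 else 0) := by
    intro α hαℓ
    rw [Finset.sum_congr rfl (key_inner α hαℓ), Finset.sum_add_distrib,
      Finset.sum_const, Finset.card_range, nsmul_eq_mul]
  have htail : ∑ α ∈ Finset.Icc β (∑ b ∈ Finset.range ℓ, r b), (if A α = A β then (1:ℤ) else 0)
      = (∑ b ∈ Finset.range (A β + 1), (r b : ℤ)) - (β : ℤ) + 1 := by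
    rw [Finset.sum_boole, Stmt4Aux.count_tail ℓ r A hA β hβ1 hβ2]
    have hble : β ≤ ∑ b ∈ Finset.range (A β + 1), r b + 1 := by omega
    push_cast [Nat.cast_sub hble]
    ring
  have hQ : (∑ α ∈ Finset.Icc β (∑ b ∈ Finset.range ℓ, r b),
        ∑ i ∈ Finset.range μ.ncols, ∑ x ∈ Finset.range (μ.colLen i),
          if x + 1 ≤ μ.colLen i - 1 ∧
              ((μ.colLen i : ℤ) - ((x : ℤ) + 1)) % ℓ = ((A β : ℤ) - (A α : ℤ)) % ℓ
            then (1:ℤ) else 0)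
      = (∑ α ∈ Finset.Icc β (∑ b ∈ Finset.range ℓ, r b),
          ∑ i ∈ Finset.range μ.ncols, ∑ x ∈ Finset.range (μ.colLen i),
            if ((μ.colLen i : ℤ) - ((x : ℤ) + 1)) % ℓ = ((A β : ℤ) - (A α : ℤ)) % ℓ
              then (1:ℤ) else 0)
        - (μ.ncols : ℤ) * ((∑ b ∈ Finset.range (A β + 1), (r b : ℤ)) - (β : ℤ) + 1) := by
    rw [← htail, Finset.mul_sum, eq_sub_iff_add_eq, ← Finset.sum_add_distrib]
    refine Finset.sum_congr rfl fun α hα => ?_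
    rw [Finset.mem_Icc] at hα
    exact (hD α (hA α (by omega) hα.2).1).symm
  have hjoin : (∑ α ∈ Finset.Ico 1 β,
        ∑ i ∈ Finset.range μ.ncols, ∑ x ∈ Finset.range (μ.colLen i),
          if ((μ.colLen i : ℤ) - ((x : ℤ) + 1)) % ℓ = ((A β : ℤ) - (A α : ℤ)) % ℓ
            then (1:ℤ) else 0)
      + (∑ α ∈ Finset.Icc β (∑ b ∈ Finset.range ℓ, r b),
          ∑ i ∈ Finset.range μ.ncols, ∑ x ∈ Finset.range (μ.colLen i),
            if ((μ.colLen i : ℤ) - ((x : ℤ) + 1)) % ℓ = ((A β : ℤ) - (A α : ℤ)) % ℓ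
              then (1:ℤ) else 0)
      = ∑ α ∈ Finset.Ioc 0 (∑ b ∈ Finset.range ℓ, r b),
          ∑ i ∈ Finset.range μ.ncols, ∑ x ∈ Finset.range (μ.colLen i),
            if ((μ.colLen i : ℤ) - ((x : ℤ) + 1)) % ℓ = ((A β : ℤ) - (A α : ℤ)) % ℓ
              then (1:ℤ) else 0 := by
    rw [← Finset.Ico_add_one_right_eq_Icc β, show Finset.Ioc 0 (∑ b ∈ Finset.range ℓ, r b)
        = Finset.Ico 1 ((∑ b ∈ Finset.range ℓ, r b) + 1) by
      ext y; simp [Nat.lt_succ_iff]; omega]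
    exact Finset.sum_Ico_consecutive _ hβ1 (by omega)
  have hmain : (∑ α ∈ Finset.Ioc 0 (∑ b ∈ Finset.range ℓ, r b),
        ∑ i ∈ Finset.range μ.ncols, ∑ x ∈ Finset.range (μ.colLen i),
          if ((μ.colLen i : ℤ) - ((x : ℤ) + 1)) % ℓ = ((A β : ℤ) - (A α : ℤ)) % ℓ
            then (1:ℤ) else 0)
      = ∑ i ∈ Finset.range μ.ncols, ∑ x ∈ Finset.range (μ.colLen i),
          (r ((((A β : ℤ) - (x : ℤ)) % ℓ)).toNat : ℤ) := by
    rw [Finset.sum_comm]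
    refine Finset.sum_congr rfl fun i hi => ?_
    rw [Finset.sum_comm]
    have hptw : ∀ x ∈ Finset.range (μ.colLen i),
        (∑ α ∈ Finset.Ioc 0 (∑ b ∈ Finset.range ℓ, r b),
          if ((μ.colLen i : ℤ) - ((x : ℤ) + 1)) % ℓ = ((A β : ℤ) - (A α : ℤ)) % ℓ
            then (1:ℤ) else 0)
        = (r ((((A β : ℤ) - ((μ.colLen i : ℤ) - ((x : ℤ) + 1))) % ℓ)).toNat : ℤ) := by
      intro x hx
      rw [Stmt4Aux.sum_group ℓ r A hA
        (fun b => if ((μ.colLen i : ℤ) - ((x : ℤ) + 1)) % ℓ = ((A β : ℤ) - (b : ℤ)) % ℓ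
          then (1:ℤ) else 0),
        ← Stmt4Aux.sum_pick ℓ hℓ0 r ((A β : ℤ) - ((μ.colLen i : ℤ) - ((x : ℤ) + 1)))]
      refine Finset.sum_congr rfl fun b hb => ?_
      congr 1
      exact if_congr (Stmt4Aux.mod_iff ℓ (A β : ℤ) ((μ.colLen i : ℤ) - ((x : ℤ) + 1)) (b : ℤ)) rfl rfl
    rw [Finset.sum_congr rfl hptw]
    refine Eq.trans (Finset.sum_congr rfl fun x hx => ?_)
      (Finset.sum_range_reflect (fun y : ℕ => (r ((((A β : ℤ) - (y : ℤ)) % ℓ)).toNat : ℤ))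
        (μ.colLen i))
    rw [Finset.mem_range] at hx
    show (r ((((A β : ℤ) - ((μ.colLen i : ℤ) - ((x : ℤ) + 1))) % ℓ)).toNat : ℤ)
      = (r ((((A β : ℤ) - ((μ.colLen i - 1 - x : ℕ) : ℤ)) % ℓ)).toNat : ℤ)
    have e : (A β : ℤ) - ((μ.colLen i : ℤ) - ((x : ℤ) + 1))
        = (A β : ℤ) - ((μ.colLen i - 1 - x : ℕ) : ℤ) := by omega
    rw [e]
  have hrhs : (∑ c ∈ Finset.range ℓ,
        (∑ i ∈ Finset.range μ.ncols, ∑ x ∈ Finset.range (μ.colLen i),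
          if ((A β : ℤ) - (x : ℤ)) % ℓ = (c : ℤ) % ℓ then (1:ℤ) else 0) * (r c : ℤ))
      = ∑ i ∈ Finset.range μ.ncols, ∑ x ∈ Finset.range (μ.colLen i),
          (r ((((A β : ℤ) - (x : ℤ)) % ℓ)).toNat : ℤ) := by
    simp only [Finset.sum_mul]
    rw [Finset.sum_comm]
    refine Finset.sum_congr rfl fun i hi => ?_
    rw [Finset.sum_comm]
    refine Finset.sum_congr rfl fun x hx => ?_
    rw [← Stmt4Aux.sum_pick ℓ hℓ0 r ((A β : ℤ) - (x : ℤ))]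
    exact Finset.sum_congr rfl fun c hc => mul_comm _ _
  linarith [hQ, hjoin, hmain, hrhs]
end

section
/- Fix an integer ℓ ≥ 2 and work in the formal power series ring ℤ[[v, X_0, …, X_{ℓ−1}]] with its product topology; extend the indexing ℓ-periodically by X_a := X_{a mod ℓ} for a ∈ ℤ, and set z := X_0 X_1 ⋯ X_{ℓ−1}. For every a ∈ ℤ, the family over all Young diagrams μ of the monomials v^{col(μ)} ∏_{(i,j) ∈ μ} X_{a−j+1} has a sum, and this sum equals the convergent infinite product ∏_{k=1}^∞ (1 − v z^k)^{−1} ∏_{c=1}^{ℓ−1} (1 − v z^{k−1} X_a X_{a−1} ⋯ X_{a−c+1})^{−1}, where each factor is a unit (constant term 1) and the product over k is a tprod in the product topology. (This is Lemma 3.2 of the paper, the partition identity ∑_μ v^{col(μ)} ∏_{(i,j)∈μ} X_{a−j+1} = ∏_{k≥1} (1 − v z^k)^{−1} ∏_{c=1}^{ℓ−1} (1 − v z^k ∏_{b=c}^{ℓ−1} X_{a−b}^{−1})^{−1}, with the negative powers removed via z ∏_{b=c}^{ℓ−1} X_{a−b}^{−1} = ∏_{b=0}^{c−1} X_{a−b}.)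 -/
noncomputable section

/-!
Reading a Young diagram by columns, a column of height `m` contributes the monomial
`v X_a X_{a-1} ⋯ X_{a-m+1}`, and a diagram is the same thing as a finitely supported multiplicity
function on column heights. Hence the sum is the Euler product
`∏_{m ≥ 1} (1 - v X_a ⋯ X_{a-m+1})⁻¹`: since the `m`-th monomial has total degree `m + 1`, a given
coefficient only sees finitely many factors and bounded multiplicities. Writing `m = kℓ + c` with
`1 ≤ c ≤ ℓ`, periodicity gives `X_a ⋯ X_{a-m+1} = z^k X_a ⋯ X_{a-c+1}`, and grouping the factors in
blocks of `ℓ` yields the stated product.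
-/

open Filter Topology Finset

theorem Finset.prod_sum_eq_sum_finsupp {ι M N : Type*} [Zero M] [CommSemiring N]
    (s : Finset ι) (t : ι → Finset M) (h : ι → M → N) (h_zero : ∀ i ∈ s, h i 0 = 1) :
    ∏ i ∈ s, ∑ k ∈ t i, h i k = ∑ f ∈ s.finsupp t, f.prod h := by
  classical
  rw [prod_sum, Finset.finsupp, sum_map]
  exact sum_congr rfl fun p _ => (Finsupp.prod_indicator_index_eq_prod_attach p h_zero).symm

theorem Multiset.toFinsupp_prod_pow {α M : Type*} [DecidableEq α] [CommMonoid M] (s : Multiset α)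
    (f : α → M) : (Multiset.toFinsupp s).prod (fun a k => f a ^ k) = (s.map f).prod :=
  (prod_multiset_map_count s f).symm

theorem ZMod.prod_range_natCast {M : Type*} [CommMonoid M] (n : ℕ) [NeZero n] (f : ZMod n → M) :
    ∏ i ∈ range n, f i = ∏ x, f x :=
  prod_nbij' Nat.cast ZMod.val (fun _ _ => mem_univ _) (fun x _ => mem_range.2 x.val_lt)
    (fun _ hi => ZMod.val_cast_of_lt (mem_range.1 hi)) (fun x _ => ZMod.natCast_zmod_val x)
    fun _ _ => rfl

theorem HasProd.prod_range_mul_add {M : Type*} [CommMonoid M] [TopologicalSpace M]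
    [ContinuousMul M] [RegularSpace M] {f : ℕ → M} {a : M} (hf : HasProd f a)
    (n : ℕ) [NeZero n] : HasProd (fun k => ∏ j ∈ range n, f (k * n + j)) a := by
  refine ((Nat.divModEquiv n).symm.hasProd_iff.2 hf).prod_fiberwise fun k => ?_
  rw [← Fin.prod_univ_eq_prod_range]
  exact hasProd_fintype _

namespace MvPowerSeries

variable {σ R ι : Type*} [CommRing R] {g : ι → MvPowerSeries σ R}

theorem order_le_order_mul (f g : MvPowerSeries σ R) : f.order ≤ (f * g).order :=
  le_self_add.trans le_order_mul

theorem order_le_order_pow {f : MvPowerSeries σ R} {k : ℕ} (hk : k ≠ 0) :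
    f.order ≤ (f ^ k).order := by
  obtain ⟨k, rfl⟩ := Nat.exists_eq_add_one_of_ne_zero hk
  rw [pow_succ']
  exact order_le_order_mul _ _

theorem card_le_order_prod {s : Finset ι} (hg0 : ∀ i ∈ s, constantCoeff (g i) = 0) :
    (#s : ℕ∞) ≤ (∏ i ∈ s, g i).order :=
  calc (#s : ℕ∞) = ∑ i ∈ s, 1 := by simp
    _ ≤ ∑ i ∈ s, (g i).order :=
      sum_le_sum fun i hi => one_le_order_iff_constCoeff_eq_zero.2 (hg0 i hi)
    _ ≤ _ := le_order_prod _ _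

theorem tendsto_order_mul_prod_range (v : MvPowerSeries σ R) {f : ℕ → MvPowerSeries σ R}
    (hf0 : ∀ i, constantCoeff (f i) = 0) :
    Tendsto (fun n => (v * ∏ i ∈ range (n + 1), f i).order) atTop (𝓝 ⊤) := by
  refine ENat.tendsto_nhds_top_iff_natCast_lt.2 fun n => eventually_atTop.2 ⟨n, fun m hm => ?_⟩
  calc (n : ℕ∞) < #(range (m + 1)) := by rw [card_range]; exact_mod_cast Nat.lt_succ_of_le hm
    _ ≤ (∏ i ∈ range (m + 1), f i).order := card_le_order_prod fun i _ => hf0 i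
    _ ≤ _ := by simpa only [mul_comm v] using order_le_order_mul _ v

theorem isUnit_one_sub {f : MvPowerSeries σ R} (hf : constantCoeff f = 0) : IsUnit (1 - f) := by
  simp [isUnit_iff_constantCoeff, hf]

theorem one_sub_mul_inverse_one_sub {f : MvPowerSeries σ R} (hf : constantCoeff f = 0) :
    (1 - f) * Ring.inverse (1 - f) = 1 :=
  Ring.mul_inverse_cancel _ (isUnit_one_sub hf)

theorem multipliable_inverse_one_sub [TopologicalSpace R] [LinearOrder ι] [LocallyFiniteOrderBot ι]
    (hg0 : ∀ i, constantCoeff (g i) = 0) (hg : Tendsto (fun i => (g i).order) atTop (𝓝 ⊤)) :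
    Multipliable fun i => Ring.inverse (1 - g i) := by
  have hq : ∀ i, Ring.inverse (1 - g i) = 1 + g i * Ring.inverse (1 - g i) := fun i => by
    linear_combination one_sub_mul_inverse_one_sub (hg0 i)
  rw [funext hq]
  exact WithPiTopology.multipliable_one_add_of_tendsto_order_atTop_nhds_top
    (tendsto_nhds_top_mono hg (.of_forall fun i => order_le_order_mul _ _))

theorem coeff_prod_inverse_one_sub_of_subset [DecidableEq ι] (hg0 : ∀ i, constantCoeff (g i) = 0)
    {d : σ →₀ ℕ} {s t : Finset ι} (hts : t ⊆ s) (hd : ∀ i ∈ s \ t, d.degree < (g i).order) :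
    coeff d (∏ i ∈ s, Ring.inverse (1 - g i)) = coeff d (∏ i ∈ t, Ring.inverse (1 - g i)) := by
  have : (∏ i ∈ s, Ring.inverse (1 - g i)) * ∏ i ∈ s \ t, (1 - g i)
      = ∏ i ∈ t, Ring.inverse (1 - g i) := by
    rw [← prod_sdiff hts, mul_right_comm, ← prod_mul_distrib,
      prod_eq_one fun i _ => Ring.inverse_mul_cancel _ (isUnit_one_sub (hg0 i)), one_mul]
  rw [← this, coeff_mul_prod_one_sub_of_lt_order _ _ _ _ hd]

theorem coeff_prod_inverse_one_sub_eq_coeff_prod_geom_sum (hg0 : ∀ i, constantCoeff (g i) = 0)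
    {d : σ →₀ ℕ} {n : ℕ} (hn : d.degree < n) (t : Finset ι) :
    coeff d (∏ i ∈ t, Ring.inverse (1 - g i)) = coeff d (∏ i ∈ t, ∑ k ∈ range n, g i ^ k) := by
  have hgeom : ∀ i, ∑ k ∈ range n, g i ^ k = Ring.inverse (1 - g i) * (1 - g i ^ n) := fun i => by
    rw [← mul_neg_geom_sum, ← mul_assoc, mul_comm (Ring.inverse _),
      one_sub_mul_inverse_one_sub (hg0 i), one_mul]
  simp_rw [hgeom, prod_mul_distrib]
  refine (coeff_mul_prod_one_sub_of_lt_order _ _ _ _ fun i _ => ?_).symm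
  exact (Nat.cast_lt.2 hn).trans_le (le_order_pow_of_constantCoeff_eq_zero n (hg0 i))

theorem coeff_finsupp_prod_pow_eq_zero (hg0 : ∀ i, constantCoeff (g i) = 0) {d : σ →₀ ℕ}
    {t : Finset ι} (ht : ∀ i ∉ t, d.degree < (g i).order) {f : ι →₀ ℕ}
    (hf : f ∉ t.finsupp fun _ => range (d.degree + 1)) :
    coeff d (f.prod fun i k => g i ^ k) = 0 := by
  classical
  obtain ⟨i, hi, hdi⟩ : ∃ i ∈ f.support, d.degree < (g i ^ f i).order := by
    by_cases hsub : f.support ⊆ t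
    · obtain ⟨i, -, hfi⟩ : ∃ i ∈ t, d.degree + 1 ≤ f i := by
        simpa [mem_finsupp_iff, hsub] using hf
      refine ⟨i, Finsupp.mem_support_iff.2 (by omega), ?_⟩
      exact (Nat.cast_lt.2 (by omega)).trans_le (le_order_pow_of_constantCoeff_eq_zero _ (hg0 i))
    · obtain ⟨i, hi, hit⟩ := not_subset.1 hsub
      exact ⟨i, hi, (ht i hit).trans_le (order_le_order_pow (Finsupp.mem_support_iff.1 hi))⟩
  rw [Finsupp.prod, ← mul_prod_erase _ _ hi]
  exact coeff_of_lt_order (hdi.trans_le (order_le_order_mul _ _))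

theorem hasSum_finsupp_prod_pow_of_hasProd [TopologicalSpace R] [T2Space R]
    (hg0 : ∀ i, constantCoeff (g i) = 0) (hg : Tendsto (fun i => (g i).order) cofinite (𝓝 ⊤))
    {P : MvPowerSeries σ R} (hP : HasProd (fun i => Ring.inverse (1 - g i)) P) :
    HasSum (fun f : ι →₀ ℕ => f.prod fun i k => g i ^ k) P := by
  classical
  refine WithPiTopology.hasSum_iff_hasSum_coeff.2 fun d => ?_
  obtain ⟨t, ht⟩ : ∃ t : Finset ι, ∀ i ∉ t, d.degree < (g i).order := by
    have hfin := eventually_cofinite.1 (ENat.tendsto_nhds_top_iff_natCast_lt.1 hg d.degree)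
    exact ⟨hfin.toFinset, fun i hi => by simpa using hi⟩
  have hPd : coeff d P = coeff d (∏ i ∈ t, Ring.inverse (1 - g i)) := by
    refine tendsto_nhds_unique ((WithPiTopology.tendsto_iff_coeff_tendsto _ _ _).1 hP d) ?_
    exact tendsto_atTop_of_eventually_const (i₀ := t) fun s hs =>
      coeff_prod_inverse_one_sub_of_subset hg0 hs fun i hi => ht i (mem_sdiff.1 hi).2
  rw [hPd, coeff_prod_inverse_one_sub_eq_coeff_prod_geom_sum hg0 (lt_add_one _),
    prod_sum_eq_sum_finsupp _ _ _ fun i _ => pow_zero _, map_sum]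
  exact hasSum_sum_of_ne_finset_zero fun f hf => coeff_finsupp_prod_pow_eq_zero hg0 ht hf

end MvPowerSeries

section Periodic

variable {M : Type*} [CommMonoid M] {ℓ : ℕ} [NeZero ℓ] (x : ZMod ℓ → M) (a : ℤ)

theorem prod_range_intCast_sub : ∏ i ∈ range ℓ, x ((a - i : ℤ) : ZMod ℓ) = ∏ c, x c := by
  simp only [Int.cast_sub, Int.cast_natCast]
  rw [ZMod.prod_range_natCast ℓ fun c => x (a - c)]
  exact Fintype.prod_equiv (Equiv.subLeft (a : ZMod ℓ)) _ _ fun _ => rfl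

theorem prod_range_mul_add_intCast_sub (k c : ℕ) :
    ∏ i ∈ range (k * ℓ + c), x ((a - i : ℤ) : ZMod ℓ)
      = (∏ c, x c) ^ k * ∏ i ∈ range c, x ((a - i : ℤ) : ZMod ℓ) := by
  induction k with
  | zero => simp
  | succ k ih =>
    have hshift : ∀ i : ℕ, ((a - (k * ℓ + c + i : ℕ) : ℤ) : ZMod ℓ)
        = ((a - (k * ℓ + c : ℕ) - i : ℤ) : ZMod ℓ) := fun i => by push_cast; ring_nf
    rw [show (k + 1) * ℓ + c = k * ℓ + c + ℓ by ring, prod_range_add, ih]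
    simp only [hshift, prod_range_intCast_sub]
    rw [pow_succ, mul_right_comm]

theorem prod_range_apply_prod_range_mul_add_intCast_sub {N : Type*} [CommMonoid N] (F : M → N)
    (k : ℕ) :
    ∏ j ∈ range ℓ, F (∏ i ∈ range (k * ℓ + j + 1), x ((a - i : ℤ) : ZMod ℓ))
      = F ((∏ b ∈ range ℓ, x ((b : ℤ) : ZMod ℓ)) ^ (k + 1)) *
        ∏ c ∈ Icc 1 (ℓ - 1), F ((∏ b ∈ range ℓ, x ((b : ℤ) : ZMod ℓ)) ^ k *
          ∏ i ∈ range c, x ((a - i : ℤ) : ZMod ℓ)) := by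
  simp only [Int.cast_natCast, ZMod.prod_range_natCast ℓ x, add_assoc,
    prod_range_mul_add_intCast_sub]
  obtain ⟨m, rfl⟩ := Nat.exists_eq_add_one_of_ne_zero (NeZero.ne ℓ)
  rw [prod_range_succ, prod_range_intCast_sub, ← pow_succ, mul_comm, Nat.add_sub_cancel,
    ← Ico_add_one_right_eq_Icc, prod_Ico_eq_prod_range, Nat.add_sub_cancel]
  simp only [add_comm 1]

end Periodic

def sortedPosListEquivPosMultiset :
    {w : List ℕ // w.SortedGE ∧ ∀ x ∈ w, 0 < x} ≃ {s : Multiset ℕ // ∀ x ∈ s, 0 < x} where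
  toFun w := ⟨w.1, w.2.2⟩
  invFun s := ⟨s.1.sort (· ≥ ·), (Multiset.pairwise_sort _ _).sortedGE,
    fun x hx => s.2 x ((Multiset.mem_sort _).1 hx)⟩
  left_inv w := Subtype.ext <| by
    simpa [Multiset.coe_sort] using List.mergeSort_eq_self _ w.2.1.pairwise
  right_inv s := Subtype.ext (Multiset.sort_eq _ _)

def posMultisetEquiv : {s : Multiset ℕ // ∀ x ∈ s, 0 < x} ≃ Multiset ℕ where
  toFun s := s.1.map (· - 1)
  invFun t := ⟨t.map (· + 1), by simp⟩
  left_inv s := Subtype.ext <| by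
    change (s.1.map (· - 1)).map (· + 1) = s.1
    rw [Multiset.map_map]
    conv_rhs => rw [← Multiset.map_id s.1]
    exact Multiset.map_congr rfl fun x hx => Nat.sub_add_cancel (s.2 x hx)
  right_inv t := by simp [Multiset.map_map]

namespace YoungDiagram

theorem coe_rowLens_transpose (μ : YoungDiagram) :
    (μ.transpose.rowLens : Multiset ℕ) = (range (μ.rowLen 0)).val.map μ.colLen := by
  have : μ.transpose.rowLen = μ.colLen := funext μ.rowLen_transpose
  simp [rowLens, this, colLen_transpose, Multiset.range]

/-- `colLensEquiv μ h` is the number of columns of `μ` of length `h + 1`. -/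
def colLensEquiv : YoungDiagram ≃ (ℕ →₀ ℕ) :=
  transposeOrderIso.toEquiv.trans <| equivListRowLens.trans <|
    sortedPosListEquivPosMultiset.trans <| posMultisetEquiv.trans Multiset.toFinsupp.toEquiv

theorem prod_colLensEquiv {M : Type*} [CommMonoid M] (μ : YoungDiagram) (G : ℕ → M) :
    (colLensEquiv μ).prod (fun h k => G (h + 1) ^ k)
      = ∏ j ∈ range (μ.rowLen 0), G (μ.colLen j) := by
  classical
  have hpos : ∀ m ∈ (μ.transpose.rowLens : Multiset ℕ), 0 < m := μ.transpose.pos_of_mem_rowLens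
  change (Multiset.toFinsupp ((μ.transpose.rowLens : Multiset ℕ).map (· - 1))).prod _ = _
  rw [Multiset.toFinsupp_prod_pow, Multiset.map_map,
    Multiset.map_congr (f := (fun h => G (h + 1)) ∘ (· - 1)) (g := G) rfl
      fun m hm => congrArg G (Nat.sub_add_cancel (hpos m hm)),
    coe_rowLens_transpose, Multiset.map_map]
  rfl

theorem prod_cells_fst {M : Type*} [CommMonoid M] (μ : YoungDiagram) (x : ℕ → M) :
    ∏ c ∈ μ.cells, x c.1 = ∏ j ∈ range (μ.rowLen 0), ∏ i ∈ range (μ.colLen j), x i := by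
  refine prod_finset_product_right' (f := fun i _ => x i) _ _ _ fun c => ?_
  simp only [mem_cells, mem_range, ← mem_iff_lt_colLen, ← mem_iff_lt_rowLen]
  exact ⟨fun h => ⟨μ.up_left_mem (Nat.zero_le _) le_rfl h, h⟩, And.right⟩

theorem pow_ncols_mul_prod_cells {M : Type*} [CommMonoid M] (μ : YoungDiagram) (v : M)
    (x : ℕ → M) : v ^ μ.ncols * ∏ c ∈ μ.cells, x c.1
      = (colLensEquiv μ).prod fun h k => (v * ∏ i ∈ range (h + 1), x i) ^ k := by
  rw [prod_colLensEquiv μ fun m => v * ∏ i ∈ range m, x i, prod_mul_distrib, prod_const,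
    card_range, prod_cells_fst]
  rfl

end YoungDiagram

/-- Mathlib's cell `(r, c)` is the paper's box `(c + 1, r + 1)`, and `factor k` is the paper's
factor for `k + 1`. -/
theorem stmt5 (ℓ : ℕ) (hℓ : 2 ≤ ℓ) (a : ℤ) :
    let S := MvPowerSeries (Option (ZMod ℓ)) ℤ
    let v : S := MvPowerSeries.X none
    let Xv : ℤ → S := fun b => MvPowerSeries.X (some (b : ZMod ℓ))
    let z : S := ∏ b ∈ Finset.range ℓ, Xv (b : ℤ)
    let factor : ℕ → S := fun k =>
      Ring.inverse (1 - v * z ^ (k + 1)) *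
        ∏ c ∈ Finset.Icc 1 (ℓ - 1),
          Ring.inverse (1 - v * z ^ k * ∏ b ∈ Finset.range c, Xv (a - (b : ℤ)))
    (∀ k : ℕ, IsUnit (1 - v * z ^ (k + 1))) ∧
    (∀ k : ℕ, ∀ c ∈ Finset.Icc 1 (ℓ - 1),
      IsUnit (1 - v * z ^ k * ∏ b ∈ Finset.range c, Xv (a - (b : ℤ)))) ∧
    Multipliable factor ∧
    HasSum
      (fun μ : YoungDiagram => v ^ μ.ncols * ∏ cell ∈ μ.cells, Xv (a - (cell.1 : ℤ)))
      (∏' k : ℕ, factor k) := by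
  intro S v Xv z factor
  have : NeZero ℓ := ⟨by omega⟩
  have : RegularSpace S := inferInstanceAs (RegularSpace ((Option (ZMod ℓ) →₀ ℕ) → ℤ))
  have : T2Space S := inferInstanceAs (T2Space ((Option (ZMod ℓ) →₀ ℕ) → ℤ))
  have : IsTopologicalSemiring S := MvPowerSeries.WithPiTopology.instIsTopologicalSemiring _ _
  have hv : MvPowerSeries.constantCoeff v = 0 := MvPowerSeries.constantCoeff_X none
  let g : ℕ → S := fun h => v * ∏ i ∈ range (h + 1), Xv (a - i)
  have hg0 : ∀ h, MvPowerSeries.constantCoeff (g h) = 0 := fun h => by simp [g, hv]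
  have hg : Tendsto (fun h => (g h).order) atTop (𝓝 ⊤) :=
    MvPowerSeries.tendsto_order_mul_prod_range v fun i => MvPowerSeries.constantCoeff_X _
  obtain ⟨P, hP⟩ := MvPowerSeries.multipliable_inverse_one_sub hg0 hg
  have hfactor : HasProd factor P := by
    convert hP.prod_range_mul_add ℓ using 2 with k
    rw [prod_range_apply_prod_range_mul_add_intCast_sub (fun c => (MvPowerSeries.X (some c) : S)) a
      (fun y => Ring.inverse (1 - v * y))]
    simp only [factor, mul_assoc]
    rfl
  refine ⟨fun k => MvPowerSeries.isUnit_one_sub (by simp [hv]),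
    fun k c _ => MvPowerSeries.isUnit_one_sub (by simp [hv]), hfactor.multipliable, ?_⟩
  rw [hfactor.tprod_eq]
  convert YoungDiagram.colLensEquiv.hasSum_iff.2 (MvPowerSeries.hasSum_finsupp_prod_pow_of_hasProd
    hg0 (Nat.cofinite_eq_atTop ▸ hg) hP) using 2 with μ
  exact YoungDiagram.pow_ncols_mul_prod_cells μ v fun i => Xv (a - i)
end
end

section
/- Fix an integer ℓ ≥ 2, an integer k ≥ 1, and an ℓ-periodic function r : ℤ → ℕ. In the field K of rational functions over ℚ in the variables y, q̃_0, …, q̃_{ℓ−1} (with q̃ extended ℓ-periodically and z := q̃_0 ⋯ q̃_{ℓ−1}), set u_a := (q̃_{−a} q̃_{−a−1} ⋯ q̃_{−ℓ+1})^{−1} ∈ K for 1 ≤ a ≤ ℓ−1. Then the following identity holds: ∏_{(a,c) : 1 ≤ a, c ≤ ℓ−1, a ≠ c} ∏_{t=1}^{r_a} (1 − y^{−2t} z^{k−1} q̃_a q̃_{a−1} ⋯ q̃_{a−c+1}) = ∏_{1 ≤ a < c ≤ ℓ−1} [∏_{t=1}^{r_{ℓ−c}} (1 − y^{−2t} z^k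 u_a u_c^{−1})] · [∏_{t=1}^{r_{ℓ−a}} (1 − y^{−2t} z^{k−1} u_a^{−1} u_c)]. (This is Lemma B.2 of the paper, identity (eq:PPsix), equivalently identity (eq:PPfourDB), stated in factor form.) -/
/-!
Write `P(A, C) = q̃_A q̃_{A-1} ⋯ q̃_{A-C+1}` and `W(m) = P(m, m)`. By periodicity `u_a = W(ℓ-a)⁻¹`
and `z = W(ℓ)`. Splitting products of consecutive `q̃`'s gives `u_a⁻¹ u_c = P(ℓ-a, c-a)`, and,
since any `ℓ` consecutive `q̃`'s multiply to `z`, also `z u_a u_c⁻¹ = P(ℓ-c, ℓ-c+a)`. So the right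
side is the left side reindexed by `(A, C) = (ℓ-a, c-a)` on the pairs with `A > C` and by
`(A, C) = (ℓ-c, ℓ-c+a)` on those with `A < C`; in both cases the exponent `r` is read at `A`.
-/

noncomputable section

open MvPolynomial Finset

section DescProd

variable {M : Type*} [CommMonoid M]

def descProd (q : ℤ → M) (A : ℤ) (C : ℕ) : M := ∏ b ∈ range C, q (A - b)

variable {q : ℤ → M} {ℓ : ℕ}

lemma descProd_add (q : ℤ → M) (A : ℤ) (C D : ℕ) :
    descProd q A (C + D) = descProd q A C * descProd q (A - C) D := by
  simp only [descProd, prod_range_add, Nat.cast_add, sub_add_eq_sub_sub]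

lemma descProd_mul_descProd_self_sub (q : ℤ → M) {A C : ℕ} (h : C ≤ A) :
    descProd q A C * descProd q (A - C : ℕ) (A - C) = descProd q A A := by
  rw [Nat.cast_sub h, ← descProd_add, Nat.add_sub_cancel' h]

lemma prod_range_eq_descProd_self (hper : Function.Periodic q ℓ) :
    ∏ b ∈ range ℓ, q b = descProd q ℓ ℓ := by
  obtain _ | n := ℓ
  · simp [descProd]
  have hshift : ∏ b ∈ range (n + 1), q (b + 1) = ∏ b ∈ range (n + 1), q b := by
    rw [prod_range_succ, prod_range_succ' (fun b : ℕ => q b)]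
    simpa using congrArg (_ * ·) (hper 0)
  rw [descProd, ← hshift, ← prod_range_reflect]
  refine prod_congr rfl fun b hb => ?_
  rw [mem_range] at hb
  congr 1
  omega

lemma prod_Icc_neg_eq_descProd_self (hper : Function.Periodic q ℓ) {a : ℕ} (ha : 1 ≤ a) :
    ∏ b ∈ Icc a (ℓ - 1), q (-b) = descProd q (ℓ - a : ℕ) (ℓ - a) := by
  have hIcc : Icc a (ℓ - 1) = Ico a ℓ := by
    ext b; simp only [mem_Icc, mem_Ico]; omega
  rw [hIcc, prod_Ico_eq_prod_range, descProd]
  refine prod_congr rfl fun b hb => ?_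
  rw [mem_range] at hb
  rw [← hper]
  congr 1
  omega

lemma descProd_add_mul_descProd_self (hper : Function.Periodic q ℓ) {a : ℕ} (ha : a ≤ ℓ) (A : ℕ) :
    descProd q A (A + a) * descProd q (ℓ - a : ℕ) (ℓ - a) =
      descProd q ℓ ℓ * descProd q A A := by
  have hwrap : descProd q ℓ a = descProd q 0 a :=
    prod_congr rfl fun b _ => by rw [zero_sub, ← hper (-(b : ℤ)), neg_add_eq_sub]
  have hz := descProd_add q ℓ a (ℓ - a)
  rw [Nat.add_sub_cancel' ha, hwrap, ← Nat.cast_sub ha] at hz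
  rw [descProd_add, sub_self, hz]
  ac_rfl

end DescProd

section GroupWithZero

variable {G₀ : Type*} [CommGroupWithZero G₀] {q : ℤ → G₀} {ℓ : ℕ}

lemma descProd_ne_zero (hq : ∀ a, q a ≠ 0) (A : ℤ) (C : ℕ) : descProd q A C ≠ 0 :=
  prod_ne_zero_iff.mpr fun _ _ => hq _

lemma descProd_eq_mul_inv (hq : ∀ a, q a ≠ 0) {A C : ℕ} (h : C ≤ A) :
    descProd q A C = descProd q A A * (descProd q (A - C : ℕ) (A - C))⁻¹ := by
  rw [← descProd_mul_descProd_self_sub q h, mul_inv_cancel_right₀ (descProd_ne_zero hq _ _)]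

lemma pow_mul_inv_mul_descProd_self (hper : Function.Periodic q ℓ) (hq : ∀ a, q a ≠ 0)
    {k a : ℕ} (hk : 1 ≤ k) (ha : a ≤ ℓ) (A : ℕ) :
    descProd q ℓ ℓ ^ k * (descProd q (ℓ - a : ℕ) (ℓ - a))⁻¹ * descProd q A A =
      descProd q ℓ ℓ ^ (k - 1) * descProd q A (A + a) := by
  obtain ⟨j, rfl⟩ : ∃ j, k = j + 1 := ⟨k - 1, by omega⟩
  rw [Nat.add_sub_cancel, pow_succ, mul_right_comm _ _ (descProd q A A), mul_assoc (_ ^ j),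
    ← descProd_add_mul_descProd_self hper ha, ← mul_assoc,
    mul_inv_cancel_right₀ (descProd_ne_zero hq _ _)]

end GroupWithZero

lemma prod_filter_ne_Icc_eq_prod_Ico {M : Type*} [CommMonoid M] (n : ℕ) (F : ℕ × ℕ → M) :
    ∏ p ∈ (Icc 1 (n - 1) ×ˢ Icc 1 (n - 1)).filter (fun p : ℕ × ℕ => p.1 ≠ p.2), F p =
      ∏ c ∈ Icc 1 (n - 1), ∏ a ∈ Ico 1 c, F (n - c, n - c + a) * F (n - a, c - a) := by
  simp only [prod_mul_distrib, prod_sigma']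
  rw [← prod_filter_mul_prod_filter_not _ (fun p : ℕ × ℕ => p.1 < p.2)]
  congr 1
  · refine prod_nbij' (fun p => ⟨n - p.1, p.2 - p.1⟩) (fun x => (n - x.1, n - x.1 + x.2))
      ?_ ?_ ?_ ?_ fun _ _ => congrArg F ?_ <;>
    intros <;> simp only [mem_filter, mem_product, mem_sigma, mem_Icc, mem_Ico, Prod.ext_iff,
      Sigma.ext_iff, heq_iff_eq] at * <;> omega
  · refine prod_nbij' (fun p => ⟨n - p.1 + p.2, n - p.1⟩) (fun x => (n - x.2, x.1 - x.2))
      ?_ ?_ ?_ ?_ fun _ _ => congrArg F ?_ <;>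
    intros <;> simp only [mem_filter, mem_product, mem_sigma, mem_Icc, mem_Ico, Prod.ext_iff,
      Sigma.ext_iff, heq_iff_eq] at * <;> omega

theorem stmt15_general (ℓ : ℕ) (k : ℕ) (hk : 1 ≤ k) (r : ℤ → ℕ) :
    let K := FractionRing (MvPolynomial (Option (ZMod ℓ)) ℚ)
    let y : K := algebraMap (MvPolynomial (Option (ZMod ℓ)) ℚ) K (X none)
    let qt : ℤ → K := fun a =>
      algebraMap (MvPolynomial (Option (ZMod ℓ)) ℚ) K (X (some (a : ZMod ℓ)))
    let z : K := ∏ b ∈ Finset.range ℓ, qt (b : ℤ)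
    let u : ℕ → K := fun a => (∏ b ∈ Finset.Icc a (ℓ - 1), qt (-(b : ℤ)))⁻¹
    (∏ p ∈ (Finset.Icc 1 (ℓ - 1) ×ˢ Finset.Icc 1 (ℓ - 1)).filter
          (fun p : ℕ × ℕ => p.1 ≠ p.2),
        ∏ t ∈ Finset.Icc 1 (r (p.1 : ℤ)),
          (1 - y ^ (-(2 * (t : ℤ))) * z ^ (k - 1) *
            ∏ b ∈ Finset.range p.2, qt ((p.1 : ℤ) - (b : ℤ))))
    = ∏ c ∈ Finset.Icc 1 (ℓ - 1), ∏ a ∈ Finset.Ico 1 c,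
        (∏ t ∈ Finset.Icc 1 (r ((ℓ : ℤ) - (c : ℤ))),
          (1 - y ^ (-(2 * (t : ℤ))) * z ^ k * u a * (u c)⁻¹)) *
        (∏ t ∈ Finset.Icc 1 (r ((ℓ : ℤ) - (a : ℤ))),
          (1 - y ^ (-(2 * (t : ℤ))) * z ^ (k - 1) * (u a)⁻¹ * u c)) := by
  intro K y qt z u
  have hper : Function.Periodic qt ℓ := fun a => by simp [qt]
  have hq : ∀ a, qt a ≠ 0 := fun a =>
    (map_ne_zero_iff _ (IsFractionRing.injective _ K)).mpr (X_ne_zero _)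
  have hz : z = descProd qt ℓ ℓ := prod_range_eq_descProd_self hper
  have hu : ∀ a, 1 ≤ a → u a = (descProd qt (ℓ - a : ℕ) (ℓ - a))⁻¹ := fun a ha =>
    congrArg (·⁻¹) (prod_Icc_neg_eq_descProd_self hper ha)
  refine (prod_filter_ne_Icc_eq_prod_Ico ℓ _).trans
    (prod_congr rfl fun c hc => prod_congr rfl fun a ha => ?_)
  simp only [mem_Icc, mem_Ico] at hc ha
  rw [hu a ha.1, hu c hc.1, inv_inv, hz, ← Nat.cast_sub (by omega), ← Nat.cast_sub (by omega)]
  simp only [← descProd.eq_1]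
  congr 1 <;> refine prod_congr rfl fun t _ => ?_
  · linear_combination y ^ (-(2 * (t : ℤ))) *
      pow_mul_inv_mul_descProd_self hper hq hk (a := a) (by omega) (ℓ - c)
  · rw [descProd_eq_mul_inv hq (by omega : c - a ≤ ℓ - a), show ℓ - a - (c - a) = ℓ - c by omega,
      inv_inv, mul_assoc _ (descProd _ _ _)]

/-- Lemma B.2, identity (eq:PPsix) = (eq:PPfourDB), k-th factor form:
Fix `ℓ ≥ 2`, `k ≥ 1`, and an `ℓ`-periodic `r : ℤ → ℕ`. In the field `K` of rational functions
over `ℚ` in `y, q̃_0, …, q̃_{ℓ−1}` (indexed ℓ-periodically, `z := q̃_0 ⋯ q̃_{ℓ−1}`), set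
`u_a := (q̃_{−a} q̃_{−a−1} ⋯ q̃_{−ℓ+1})⁻¹` for `1 ≤ a ≤ ℓ−1`. Then
`∏_{(a,c) : 1 ≤ a,c ≤ ℓ−1, a ≠ c} ∏_{t=1}^{r_a} (1 − y^{−2t} z^{k−1} q̃_a q̃_{a−1} ⋯ q̃_{a−c+1})
 = ∏_{1 ≤ a < c ≤ ℓ−1} [∏_{t=1}^{r_{ℓ−c}} (1 − y^{−2t} z^k u_a u_c^{−1})]
   · [∏_{t=1}^{r_{ℓ−a}} (1 − y^{−2t} z^{k−1} u_a^{−1} u_c)]`. -/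
theorem stmt15 (ℓ : ℕ) (hℓ : 2 ≤ ℓ) (k : ℕ) (hk : 1 ≤ k) (r : ℤ → ℕ)
    (hr : ∀ a : ℤ, r (a + ℓ) = r a) :
    let K := FractionRing (MvPolynomial (Option (ZMod ℓ)) ℚ)
    let y : K := algebraMap (MvPolynomial (Option (ZMod ℓ)) ℚ) K (X none)
    let qt : ℤ → K := fun a =>
      algebraMap (MvPolynomial (Option (ZMod ℓ)) ℚ) K (X (some (a : ZMod ℓ)))
    let z : K := ∏ b ∈ Finset.range ℓ, qt (b : ℤ)
    let u : ℕ → K := fun a => (∏ b ∈ Finset.Icc a (ℓ - 1), qt (-(b : ℤ)))⁻¹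
    (∏ p ∈ (Finset.Icc 1 (ℓ - 1) ×ˢ Finset.Icc 1 (ℓ - 1)).filter
          (fun p : ℕ × ℕ => p.1 ≠ p.2),
        ∏ t ∈ Finset.Icc 1 (r (p.1 : ℤ)),
          (1 - y ^ (-(2 * (t : ℤ))) * z ^ (k - 1) *
            ∏ b ∈ Finset.range p.2, qt ((p.1 : ℤ) - (b : ℤ))))
    = ∏ c ∈ Finset.Icc 1 (ℓ - 1), ∏ a ∈ Finset.Ico 1 c,
        (∏ t ∈ Finset.Icc 1 (r ((ℓ : ℤ) - (c : ℤ))),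
          (1 - y ^ (-(2 * (t : ℤ))) * z ^ k * u a * (u c)⁻¹)) *
        (∏ t ∈ Finset.Icc 1 (r ((ℓ : ℤ) - (a : ℤ))),
          (1 - y ^ (-(2 * (t : ℤ))) * z ^ (k - 1) * (u a)⁻¹ * u c)) :=
  stmt15_general ℓ k hk r
end
end
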